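/- arXiv:2503.04102 — 4 statements merged into one kernel-verified Lean document; each statement's English description precedes it below -/
import Mathlib

section
/- There exist positive constants T and c such that the following holds for every finite field F with |F| = q. For every subset U ⊆ F³ with n := |U| ≥ Tq such that every line of F³ contains at most n/2 points of U, there is a family B ⊆ G₃(U) with |B| ≥ c·n³ such that for every B ∈ B, the plane spanned by B satisfies |U ∩ K_B| ≥ c·n/q. (Claim 6.) -/
open Finset
open Module

set_option linter.unusedSectionVars false
set_option maxHeartbeats 1000000

noncomputable section

/-- A finite point set is contained in a line (1-dimensional affine subspace) of `F³`. -/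
def inLine (F : Type*) [Field F] (A : Finset (Fin 3 → F)) : Prop :=
  ∃ L : AffineSubspace F (Fin 3 → F), Module.finrank F L.direction = 1 ∧ ∀ x ∈ A, x ∈ L

/- `G₃(U)`: the 3-element subsets of `U` not contained in any line. -/
open Classical in
def G3 (F : Type*) [Field F] (U : Finset (Fin 3 → F)) : Finset (Finset (Fin 3 → F)) :=
  (U.powersetCard 3).filter (fun A => ¬ inLine F A)

/- The number of points of `U` lying in the set `s`. -/
open Classical in
def nIn {α : Type*} (U : Finset α) (s : Set α) : ℕ :=
  (U.filter (fun x => x ∈ s)).card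

lemma nIn_eq {α : Type*} (U : Finset α) (s : Set α) [DecidablePred (· ∈ s)] :
    nIn U s = (U.filter (fun x => x ∈ s)).card := by
  unfold nIn
  exact congrArg Finset.card (Finset.filter_congr_decidable U (fun x => x ∈ s) _)

section Helpers

variable {F : Type} [Field F] [Fintype F]

lemma rank_pair {a b : Fin 3 → F} (hab : a ≠ b) :
    Module.finrank F (affineSpan F ({a, b} : Set (Fin 3 → F))).direction = 1 := by
  rw [direction_affineSpan, vectorSpan_pair]
  exact finrank_span_singleton (vsub_ne_zero.2 hab)

lemma line_eq {a b : Fin 3 → F} (hab : a ≠ b) {L : AffineSubspace F (Fin 3 → F)}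
    (h1 : Module.finrank F L.direction = 1) (ha : a ∈ L) (hb : b ∈ L) :
    affineSpan F ({a, b} : Set (Fin 3 → F)) = L := by
  have hle : affineSpan F ({a, b} : Set (Fin 3 → F)) ≤ L := by
    rw [affineSpan_le]
    rw [Set.insert_subset_iff, Set.singleton_subset_iff]
    exact ⟨ha, hb⟩
  have hd : (affineSpan F ({a, b} : Set (Fin 3 → F))).direction = L.direction :=
    Submodule.eq_of_le_of_finrank_eq (AffineSubspace.direction_le hle)
      (by rw [rank_pair hab, h1])
  exact AffineSubspace.ext_of_direction_eq hd
    ⟨a, subset_affineSpan F _ (by simp), ha⟩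

lemma notline_rank2 {A : Finset (Fin 3 → F)} (h3 : A.card = 3) (hnl : ¬ inLine F A) :
    Module.finrank F (affineSpan F (A : Set (Fin 3 → F))).direction = 2 := by
  classical
  obtain ⟨a, b, c, hab, hac, hbc, rfl⟩ := Finset.card_eq_three.1 h3
  have hset : (({a, b, c} : Finset (Fin 3 → F)) : Set (Fin 3 → F)) = {a, b, c} := by simp
  rw [direction_affineSpan, hset]
  have hle : Module.finrank F (vectorSpan F ({a, b, c} : Set (Fin 3 → F))) ≤ 2 := by
    have : Coplanar F ({a, b, c} : Set (Fin 3 → F)) := coplanar_triple F a b c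
    exact this.finrank_le_two
  have hge : 2 ≤ Module.finrank F (vectorSpan F ({a, b, c} : Set (Fin 3 → F))) := by
    by_contra h
    push_neg at h
    apply hnl
    refine ⟨affineSpan F ({a, b, c} : Set (Fin 3 → F)), ?_, ?_⟩
    · rw [direction_affineSpan]
      have h1 : 1 ≤ Module.finrank F (vectorSpan F ({a, b, c} : Set (Fin 3 → F))) := by
        have hmono : vectorSpan F ({a, b} : Set (Fin 3 → F)) ≤
            vectorSpan F ({a, b, c} : Set (Fin 3 → F)) := by
          apply vectorSpan_mono
          intro x hx
          rcases hx with h | h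
          · exact Or.inl h
          · exact Or.inr (Or.inl h)
        have := Submodule.finrank_mono hmono
        rw [vectorSpan_pair, finrank_span_singleton (vsub_ne_zero.2 hab)] at this
        exact this
      omega
    · intro x hx
      apply subset_affineSpan
      rw [← hset]
      exact_mod_cast hx
  omega

def dotL (v : Fin 3 → F) : (Fin 3 → F) →ₗ[F] F := ∑ i, v i • LinearMap.proj i

lemma dotL_apply (v x : Fin 3 → F) : dotL v x = ∑ i, v i * x i := by
  simp [dotL]

lemma dotL_smul (c : F) (v : Fin 3 → F) : dotL (c • v) = c • dotL v := by
  apply LinearMap.ext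
  intro x
  simp [dotL_apply, Finset.mul_sum, mul_assoc]

lemma normal_exists {W : Submodule F (Fin 3 → F)} (hW : finrank F W = 2) :
    ∃ v : Fin 3 → F, v ≠ 0 ∧ LinearMap.ker (dotL v) = W := by
  have hdim : finrank F (Fin 3 → F) = 3 := Module.finrank_fin_fun F
  have hlt : W < ⊤ := by
    rcases lt_or_eq_of_le (le_top : W ≤ ⊤) with h | h
    · exact h
    · exfalso
      rw [h] at hW
      rw [finrank_top, hdim] at hW
      omega
  obtain ⟨f, hf0, hfmap⟩ := Submodule.exists_dual_map_eq_bot_of_lt_top hlt inferInstance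
  have hker : W ≤ LinearMap.ker f := by
    intro x hx
    rw [LinearMap.mem_ker]
    have : f x ∈ Submodule.map f W := Submodule.mem_map_of_mem hx
    rw [hfmap] at this
    simpa using this
  set v : Fin 3 → F := fun i => f (Pi.single i 1) with hv
  have hfx : ∀ x : Fin 3 → F, f x = dotL v x := by
    intro x
    have hx : x = ∑ i, x i • (Pi.single i (1:F) : Fin 3 → F) := by
      ext j
      simp [Pi.single_apply, eq_comm]
    conv_lhs => rw [hx]
    rw [map_sum, dotL_apply]
    congr 1
    ext i
    simp [hv, smul_eq_mul, mul_comm]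
  have hdf : dotL v = f := by
    apply LinearMap.ext
    intro x
    exact (hfx x).symm
  have hv0 : v ≠ 0 := by
    intro h
    apply hf0
    apply LinearMap.ext
    intro x
    rw [hfx x, h]
    simp [dotL_apply]
  have hrange : finrank F (LinearMap.range f) = 1 := by
    obtain ⟨x, hx⟩ : ∃ x, f x ≠ 0 := by
      by_contra h
      push_neg at h
      exact hf0 (LinearMap.ext fun x => by simp [h x])
    have h1 : (1 : F) ∈ LinearMap.range f :=
      ⟨(f x)⁻¹ • x, by simp [map_smul, inv_mul_cancel₀ hx]⟩
    have htop : LinearMap.range f = ⊤ := by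
      rw [Submodule.eq_top_iff']
      intro z
      simpa using Submodule.smul_mem _ z h1
    rw [htop, finrank_top, Module.finrank_self]
  have hkerrank : finrank F (LinearMap.ker f) = 2 := by
    have h := LinearMap.finrank_range_add_finrank_ker f
    rw [hrange, hdim] at h
    omega
  refine ⟨v, hv0, ?_⟩
  rw [hdf]
  exact (Submodule.eq_of_le_of_finrank_eq hker (by rw [hW, hkerrank])).symm

lemma planes_through_point (p : Fin 3 → F) (J : Finset (AffineSubspace F (Fin 3 → F)))
    (h2 : ∀ K ∈ J, finrank F K.direction = 2) (hp : ∀ K ∈ J, p ∈ K) :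
    (J.card : ℝ) ≤ 3 * (Fintype.card F : ℝ) ^ 2 := by
  classical
  set q := Fintype.card F with hq
  have hq2 : 2 ≤ q := Fintype.one_lt_card
  set D : Finset (Submodule F (Fin 3 → F)) := J.image AffineSubspace.direction with hD
  have hDcard : D.card = J.card := by
    apply Finset.card_image_of_injOn
    intro K₁ h₁ K₂ h₂' hd
    exact AffineSubspace.ext_of_direction_eq hd ⟨p, hp K₁ h₁, hp K₂ h₂'⟩
  set V : Finset (Fin 3 → F) := Finset.univ.erase 0 with hV
  have hVcard : V.card = q ^ 3 - 1 := by
    rw [hV, Finset.card_erase_of_mem (Finset.mem_univ _), Finset.card_univ]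
    congr 1
    rw [hq]
    simp [Fintype.card_fun]
  set g : (Fin 3 → F) → Submodule F (Fin 3 → F) := fun v => LinearMap.ker (dotL v) with hg
  have hmapsto : ∀ v ∈ V, g v ∈ V.image g := fun v hv => Finset.mem_image_of_mem g hv
  have hVsum : V.card = ∑ W ∈ V.image g, (V.filter (fun v => g v = W)).card :=
    Finset.card_eq_sum_card_fiberwise hmapsto
  have hDsub : D ⊆ V.image g := by
    intro W hW
    rw [hD, Finset.mem_image] at hW
    obtain ⟨K, hK, rfl⟩ := hW
    obtain ⟨v, hv0, hvker⟩ := normal_exists (h2 K hK)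
    exact Finset.mem_image.2 ⟨v, Finset.mem_erase.2 ⟨hv0, Finset.mem_univ _⟩, hvker⟩
  have hfiber : ∀ W ∈ D, q - 1 ≤ (V.filter (fun v => g v = W)).card := by
    intro W hW
    rw [hD, Finset.mem_image] at hW
    obtain ⟨K, hK, rfl⟩ := hW
    obtain ⟨v, hv0, hvker⟩ := normal_exists (h2 K hK)
    have hsub : ((Finset.univ.erase (0:F)).image (fun c => c • v)).card ≤
        (V.filter (fun u => g u = K.direction)).card := by
      apply Finset.card_le_card
      intro u hu
      rw [Finset.mem_image] at hu
      obtain ⟨c, hc, rfl⟩ := hu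
      have hc0 : c ≠ 0 := (Finset.mem_erase.1 hc).1
      rw [Finset.mem_filter]
      refine ⟨Finset.mem_erase.2 ⟨smul_ne_zero hc0 hv0, Finset.mem_univ _⟩, ?_⟩
      show LinearMap.ker (dotL (c • v)) = K.direction
      rw [dotL_smul, LinearMap.ker_smul _ _ hc0, hvker]
    refine le_trans ?_ hsub
    rw [Finset.card_image_of_injOn]
    · rw [Finset.card_erase_of_mem (Finset.mem_univ _), Finset.card_univ]
    · exact fun c₁ _ c₂ _ h => smul_left_injective F hv0 h
  have key : (q - 1) * D.card ≤ q ^ 3 - 1 := by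
    calc (q - 1) * D.card = ∑ _W ∈ D, (q - 1) := by rw [Finset.sum_const, smul_eq_mul, mul_comm]
    _ ≤ ∑ W ∈ D, (V.filter (fun v => g v = W)).card := Finset.sum_le_sum hfiber
    _ ≤ ∑ W ∈ V.image g, (V.filter (fun v => g v = W)).card :=
        Finset.sum_le_sum_of_subset hDsub
    _ = V.card := hVsum.symm
    _ = q ^ 3 - 1 := hVcard
  have hqR : (2 : ℝ) ≤ q := by exact_mod_cast hq2
  have h1 : ((q - 1 : ℕ) : ℝ) = (q : ℝ) - 1 := by
    rw [Nat.cast_sub (by omega)]; norm_num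
  have h2' : ((q ^ 3 - 1 : ℕ) : ℝ) = (q : ℝ) ^ 3 - 1 := by
    rw [Nat.cast_sub (Nat.one_le_pow _ _ (by omega)), Nat.cast_pow]; norm_num
  have hkeyR : ((q : ℝ) - 1) * J.card ≤ (q : ℝ) ^ 3 - 1 := by
    rw [← hDcard, ← h1, ← h2']
    exact_mod_cast key
  nlinarith [sq_nonneg ((q : ℝ) - 1), sq_nonneg (q : ℝ)]

end Helpers

/-- Claim 6: if no line contains more than half of `U`, there are `Ω(n³)` non-collinear
triples whose spanned plane contains `Ω(n/q)` points of `U`. -/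
theorem stmt1 :
    ∃ T c : ℝ, 0 < T ∧ 0 < c ∧
      ∀ (F : Type) [Field F] [Fintype F],
        ∀ U : Finset (Fin 3 → F),
          T * (Fintype.card F : ℝ) ≤ (U.card : ℝ) →
          (∀ L : AffineSubspace F (Fin 3 → F), Module.finrank F L.direction = 1 →
            (nIn U (L : Set (Fin 3 → F)) : ℝ) ≤ (U.card : ℝ) / 2) →
          ∃ B ⊆ G3 F U,
            c * (U.card : ℝ) ^ 3 ≤ (B.card : ℝ) ∧
            ∀ A ∈ B,
              c * (U.card : ℝ) / (Fintype.card F : ℝ) ≤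
                (nIn U ↑(affineSpan F (A : Set (Fin 3 → F))) : ℝ) := by
  classical
  refine ⟨200, 1/100, by norm_num, by norm_num, ?_⟩
  intro F _ _ U hTq hline
  classical
  set q : ℕ := Fintype.card F with hq
  set n : ℕ := U.card with hn
  have hq2 : 2 ≤ q := Fintype.one_lt_card
  have hqR : (2:ℝ) ≤ (q:ℝ) := by exact_mod_cast hq2
  have hqR0 : (0:ℝ) < (q:ℝ) := by linarith
  have hnR : (400:ℝ) ≤ (n:ℝ) := by nlinarith
  have hnR0 : (0:ℝ) < (n:ℝ) := by linarith
  have hn400 : 400 ≤ n := by exact_mod_cast hnR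
  set Bs := (G3 F U).filter
    (fun (A : Finset (Fin 3 → F)) => 1/100 * (n:ℝ) / (q:ℝ) ≤ (nIn U ↑(affineSpan F (A : Set (Fin 3 → F))) : ℝ))
    with hBs
  refine ⟨Bs, Finset.filter_subset _ _, ?_, fun A hA => (Finset.mem_filter.1 hA).2⟩
  have hGdef : G3 F U = (U.powersetCard 3).filter (fun A => ¬ inLine F A) := by
    unfold G3
    exact Finset.filter_congr_decidable _ _ _
  set Coll := (U.powersetCard 3).filter (fun A => inLine F A) with hColldef
  -- splitting of the powerset
  have hsplit : Coll.card + (G3 F U).card = n.choose 3 := by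
    rw [hColldef, hGdef, Finset.card_filter_add_card_filter_not,
      Finset.card_powersetCard]
  -- ordered collinear triples
  set S := ((U ×ˢ U) ×ˢ U).filter
      (fun t => t.1.1 ≠ t.1.2 ∧ t.1.1 ≠ t.2 ∧ t.1.2 ≠ t.2 ∧
        t.2 ∈ affineSpan F ({t.1.1, t.1.2} : Set (Fin 3 → F))) with hS
  -- (a) each element of S yields a collinear triple
  have hmapsCol : ∀ t ∈ S, ({t.1.1, t.1.2, t.2} : Finset (Fin 3 → F)) ∈ Coll := by
    intro t ht
    rw [hS, Finset.mem_filter] at ht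
    obtain ⟨hmem, hab, hac, hbc, hspan⟩ := ht
    rw [Finset.mem_product] at hmem
    obtain ⟨hmem1, hcU⟩ := hmem
    rw [Finset.mem_product] at hmem1
    obtain ⟨haU, hbU⟩ := hmem1
    refine Finset.mem_filter.2 ⟨Finset.mem_powersetCard.2 ⟨?_, ?_⟩, ?_⟩
    · intro x hx
      simp only [Finset.mem_insert, Finset.mem_singleton] at hx
      rcases hx with rfl | rfl | rfl
      · exact haU
      · exact hbU
      · exact hcU
    · rw [Finset.card_insert_of_notMem (by simp [hab, hac]),
        Finset.card_insert_of_notMem (by simp [hbc]), Finset.card_singleton]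
    · refine ⟨affineSpan F ({t.1.1, t.1.2} : Set (Fin 3 → F)), rank_pair hab, ?_⟩
      intro x hx
      simp only [Finset.mem_insert, Finset.mem_singleton] at hx
      rcases hx with rfl | rfl | rfl
      · exact subset_affineSpan F _ (by simp)
      · exact subset_affineSpan F _ (by simp)
      · exact hspan
  have hS_eq : S.card = ∑ A ∈ Coll,
      (S.filter (fun t => ({t.1.1, t.1.2, t.2} : Finset (Fin 3 → F)) = A)).card :=
    Finset.card_eq_sum_card_fiberwise hmapsCol
  -- (b) each collinear triple has at least 6 preimages
  have hfib6 : ∀ A ∈ Coll, 6 ≤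
      (S.filter (fun t => ({t.1.1, t.1.2, t.2} : Finset (Fin 3 → F)) = A)).card := by
    intro A hA
    obtain ⟨hpow, hlineA⟩ := Finset.mem_filter.1 hA
    obtain ⟨hAU, hA3⟩ := Finset.mem_powersetCard.1 hpow
    obtain ⟨a, b, c, hab, hac, hbc, hABC⟩ := Finset.card_eq_three.1 hA3
    obtain ⟨L, hL1, hLmem⟩ := hlineA
    have haA : a ∈ A := by rw [hABC]; simp
    have hbA : b ∈ A := by rw [hABC]; simp
    have hcA : c ∈ A := by rw [hABC]; simp
    have haU : a ∈ U := hAU haA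
    have hbU : b ∈ U := hAU hbA
    have hcU : c ∈ U := hAU hcA
    have haL : a ∈ L := hLmem a haA
    have hbL : b ∈ L := hLmem b hbA
    have hcL : c ∈ L := hLmem c hcA
    have hspan : ∀ x y z : Fin 3 → F, x ≠ y → x ∈ L → y ∈ L → z ∈ L →
        z ∈ affineSpan F ({x, y} : Set (Fin 3 → F)) := by
      intro x y z hxy hx hy hz
      rw [line_eq hxy hL1 hx hy]
      exact hz
    have hmemS : ∀ x y z : Fin 3 → F, x ∈ U → y ∈ U → z ∈ U → x ≠ y → x ≠ z → y ≠ z →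
        x ∈ L → y ∈ L → z ∈ L → ({x, y, z} : Finset (Fin 3 → F)) = A →
        ((x, y), z) ∈ S.filter
          (fun t => ({t.1.1, t.1.2, t.2} : Finset (Fin 3 → F)) = A) := by
      intro x y z hxU hyU hzU hxy hxz hyz hxL hyL hzL hxyzA
      refine Finset.mem_filter.2 ⟨?_, hxyzA⟩
      rw [hS, Finset.mem_filter]
      exact ⟨by rw [Finset.mem_product]; exact ⟨by rw [Finset.mem_product]; exact ⟨hxU, hyU⟩, hzU⟩,
        hxy, hxz, hyz, hspan x y z hxy hxL hyL hzL⟩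
    set O : Finset (((Fin 3 → F) × (Fin 3 → F)) × (Fin 3 → F)) :=
      {((a,b),c), ((a,c),b), ((b,a),c), ((b,c),a), ((c,a),b), ((c,b),a)} with hO
    have hOsub : O ⊆ S.filter
        (fun t => ({t.1.1, t.1.2, t.2} : Finset (Fin 3 → F)) = A) := by
      intro t ht
      rw [hO] at ht
      simp only [Finset.mem_insert, Finset.mem_singleton] at ht
      have e1 : ({a, b, c} : Finset (Fin 3 → F)) = A := hABC.symm
      have e2 : ({a, c, b} : Finset (Fin 3 → F)) = A := by
        rw [← e1]; ext x; simp; tauto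
      have e3 : ({b, a, c} : Finset (Fin 3 → F)) = A := by
        rw [← e1]; ext x; simp; tauto
      have e4 : ({b, c, a} : Finset (Fin 3 → F)) = A := by
        rw [← e1]; ext x; simp; tauto
      have e5 : ({c, a, b} : Finset (Fin 3 → F)) = A := by
        rw [← e1]; ext x; simp; tauto
      have e6 : ({c, b, a} : Finset (Fin 3 → F)) = A := by
        rw [← e1]; ext x; simp; tauto
      rcases ht with rfl | rfl | rfl | rfl | rfl | rfl
      · exact hmemS a b c haU hbU hcU hab hac hbc haL hbL hcL e1
      · exact hmemS a c b haU hcU hbU hac hab (Ne.symm hbc) haL hcL hbL e2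
      · exact hmemS b a c hbU haU hcU (Ne.symm hab) hbc hac hbL haL hcL e3
      · exact hmemS b c a hbU hcU haU hbc (Ne.symm hab) (Ne.symm hac) hbL hcL haL e4
      · exact hmemS c a b hcU haU hbU (Ne.symm hac) (Ne.symm hbc) hab hcL haL hbL e5
      · exact hmemS c b a hcU hbU haU (Ne.symm hbc) (Ne.symm hac) (Ne.symm hab) hcL hbL haL e6
    have hOcard : O.card = 6 := by
      rw [hO]
      rw [Finset.card_insert_of_notMem (by
        simp [Prod.ext_iff, hab, hac, hbc, Ne.symm hab, Ne.symm hac, Ne.symm hbc])]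
      rw [Finset.card_insert_of_notMem (by
        simp [Prod.ext_iff, hab, hac, hbc, Ne.symm hab, Ne.symm hac, Ne.symm hbc])]
      rw [Finset.card_insert_of_notMem (by
        simp [Prod.ext_iff, hab, hac, hbc, Ne.symm hab, Ne.symm hac, Ne.symm hbc])]
      rw [Finset.card_insert_of_notMem (by
        simp [Prod.ext_iff, hab, hac, hbc, Ne.symm hab, Ne.symm hac, Ne.symm hbc])]
      rw [Finset.card_insert_of_notMem (by
        simp [Prod.ext_iff, hab, hac, hbc, Ne.symm hab, Ne.symm hac, Ne.symm hbc])]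
      rw [Finset.card_singleton]
    calc (6 : ℕ) = O.card := hOcard.symm
    _ ≤ _ := Finset.card_le_card hOsub
  have h6 : 6 * Coll.card ≤ S.card := by
    rw [hS_eq]
    calc 6 * Coll.card = ∑ _A ∈ Coll, 6 := by rw [Finset.sum_const, smul_eq_mul, mul_comm]
    _ ≤ _ := Finset.sum_le_sum hfib6
  -- (c) upper bound on S via lines
  have hmapsPair : ∀ t ∈ S, t.1 ∈ U ×ˢ U := by
    intro t ht
    have := Finset.filter_subset _ _ ht
    rw [Finset.mem_product] at this
    exact this.1
  have hS_eq2 : S.card = ∑ pr ∈ U ×ˢ U, (S.filter (fun t => t.1 = pr)).card :=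
    Finset.card_eq_sum_card_fiberwise hmapsPair
  have hfibhalf : ∀ pr ∈ U ×ˢ U,
      ((S.filter (fun t => t.1 = pr)).card : ℝ) ≤ (n:ℝ)/2 := by
    intro pr _
    by_cases hpr12 : pr.1 = pr.2
    · have hemp : S.filter (fun t => t.1 = pr) = ∅ := by
        rw [Finset.eq_empty_iff_forall_notMem]
        intro t ht
        obtain ⟨htS, ht1⟩ := Finset.mem_filter.1 ht
        have hne := (Finset.mem_filter.1 htS).2.1
        rw [ht1] at hne
        exact hne hpr12
      rw [hemp]
      simp
      positivity
    · have hinj : (S.filter (fun t => t.1 = pr)).card ≤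
          (U.filter (fun x =>
            x ∈ (affineSpan F ({pr.1, pr.2} : Set (Fin 3 → F)) : Set (Fin 3 → F)))).card := by
        apply Finset.card_le_card_of_injOn (fun t => t.2)
        · intro t ht
          obtain ⟨htS, ht1⟩ := Finset.mem_filter.1 ht
          rw [hS, Finset.mem_filter] at htS
          obtain ⟨hmem, _, _, _, hspan⟩ := htS
          rw [Finset.mem_product] at hmem
          refine Finset.mem_filter.2 ⟨hmem.2, ?_⟩
          rw [ht1] at hspan
          exact hspan
        · intro t₁ h₁ t₂ h₂ h22
          have e1 : t₁.1 = pr := (Finset.mem_filter.1 (Finset.mem_coe.1 h₁)).2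
          have e2 : t₂.1 = pr := (Finset.mem_filter.1 (Finset.mem_coe.1 h₂)).2
          exact Prod.ext (by rw [e1, e2]) h22
      calc ((S.filter (fun t => t.1 = pr)).card : ℝ)
          ≤ ((U.filter (fun x =>
            x ∈ (affineSpan F ({pr.1, pr.2} : Set (Fin 3 → F)) : Set (Fin 3 → F)))).card : ℝ) := by
            exact_mod_cast hinj
        _ = (nIn U (affineSpan F ({pr.1, pr.2} : Set (Fin 3 → F)) : Set (Fin 3 → F)) : ℝ) := by
            rw [nIn_eq]
        _ ≤ (n:ℝ)/2 := hline _ (rank_pair hpr12)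
  have hSR : (S.card : ℝ) ≤ (n:ℝ)^2 * ((n:ℝ)/2) := by
    rw [hS_eq2]
    push_cast
    calc (∑ pr ∈ U ×ˢ U, ((S.filter (fun t => t.1 = pr)).card : ℝ))
        ≤ ∑ pr ∈ U ×ˢ U, (n:ℝ)/2 := Finset.sum_le_sum hfibhalf
      _ = ((U ×ˢ U).card : ℝ) * ((n:ℝ)/2) := by rw [Finset.sum_const, nsmul_eq_mul]
      _ = (n:ℝ)^2 * ((n:ℝ)/2) := by rw [Finset.card_product]; push_cast; ring
  have hCollR : (Coll.card : ℝ) ≤ (n:ℝ)^3/12 := by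
    have h6R : (6:ℝ) * Coll.card ≤ (S.card : ℝ) := by exact_mod_cast h6
    nlinarith
  -- (d) lower bound on the number of 3-subsets
  have hchoose : ((n:ℝ) - 2)^3/6 ≤ (n.choose 3 : ℝ) := by
    have h := Nat.pow_le_choose 3 n (α := ℝ)
    have hc1 : ((n + 1 - 3 : ℕ) : ℝ) = (n:ℝ) - 2 := by
      rw [Nat.cast_sub (by omega)]
      push_cast
      ring
    rw [Nat.factorial] at h
    norm_num [Nat.factorial] at h
    calc ((n:ℝ) - 2)^3/6 = ((n + 1 - 3 : ℕ) : ℝ)^3/6 := by rw [hc1]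
      _ ≤ _ := by exact_mod_cast h
  have hG3R : (n:ℝ)^3/20 ≤ ((G3 F U).card : ℝ) := by
    have hsplitR : (Coll.card : ℝ) + ((G3 F U).card : ℝ) = (n.choose 3 : ℝ) := by
      exact_mod_cast hsplit
    nlinarith [sq_nonneg ((n:ℝ) - 2), sq_nonneg (n:ℝ), mul_le_mul_of_nonneg_right hnR
      (mul_self_nonneg ((n:ℝ)))]
  -- Step 2 : bound the bad triples
  set Bad := (G3 F U).filter
    (fun (A : Finset (Fin 3 → F)) => ¬ (1/100 * (n:ℝ) / (q:ℝ) ≤ (nIn U ↑(affineSpan F (A : Set (Fin 3 → F))) : ℝ)))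
    with hBad
  have hsplit2 : Bs.card + Bad.card = (G3 F U).card := by
    rw [hBs, hBad]
    exact Finset.card_filter_add_card_filter_not _
  set I := Bad.image (fun (A : Finset (Fin 3 → F)) => affineSpan F (A : Set (Fin 3 → F))) with hI
  have hBadsum : Bad.card = ∑ K ∈ I,
      (Bad.filter (fun (A : Finset (Fin 3 → F)) => affineSpan F (A : Set (Fin 3 → F)) = K)).card :=
    Finset.card_eq_sum_card_fiberwise (fun A hA => Finset.mem_image_of_mem _ hA)
  have hKsmall : ∀ K ∈ I, (nIn U (K : Set (Fin 3 → F)) : ℝ) < 1/100 * (n:ℝ) / (q:ℝ) := by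
    intro K hK
    obtain ⟨A, hA, rfl⟩ := Finset.mem_image.1 hK
    have := (Finset.mem_filter.1 hA).2
    push_neg at this
    exact this
  have hG3elt : ∀ A ∈ G3 F U, A ⊆ U ∧ A.card = 3 ∧ ¬ inLine F A := by
    intro A hA
    rw [hGdef, Finset.mem_filter, Finset.mem_powersetCard] at hA
    exact ⟨hA.1.1, hA.1.2, hA.2⟩
  have hfibBadR : ∀ K ∈ I,
      ((Bad.filter (fun (A : Finset (Fin 3 → F)) => affineSpan F (A : Set (Fin 3 → F)) = K)).card : ℝ) ≤
        (nIn U (K : Set (Fin 3 → F)) : ℝ) * (1/100 * (n:ℝ) / (q:ℝ))^2 := by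
    intro K hK
    have hsub : Bad.filter (fun (A : Finset (Fin 3 → F)) => affineSpan F (A : Set (Fin 3 → F)) = K) ⊆
        (U.filter (fun x => x ∈ (K : Set (Fin 3 → F)))).powersetCard 3 := by
      intro A hA
      obtain ⟨hABad, hspanA⟩ := Finset.mem_filter.1 hA
      have hAG3 : A ∈ G3 F U := Finset.filter_subset _ _ hABad
      obtain ⟨hAU, hA3, _⟩ := hG3elt A hAG3
      refine Finset.mem_powersetCard.2 ⟨?_, hA3⟩
      intro x hx
      refine Finset.mem_filter.2 ⟨hAU hx, ?_⟩
      rw [← hspanA]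
      exact subset_affineSpan F _ (by exact_mod_cast hx)
    have hcard : (Bad.filter (fun (A : Finset (Fin 3 → F)) => affineSpan F (A : Set (Fin 3 → F)) = K)).card ≤
        (nIn U (K : Set (Fin 3 → F))).choose 3 := by
      calc (Bad.filter (fun (A : Finset (Fin 3 → F)) => affineSpan F (A : Set (Fin 3 → F)) = K)).card
          ≤ ((U.filter (fun x => x ∈ (K : Set (Fin 3 → F)))).powersetCard 3).card :=
            Finset.card_le_card hsub
        _ = ((U.filter (fun x => x ∈ (K : Set (Fin 3 → F)))).card).choose 3 :=
            Finset.card_powersetCard 3 _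
        _ = (nIn U (K : Set (Fin 3 → F))).choose 3 := by rw [nIn_eq]
    have hch : ((nIn U (K : Set (Fin 3 → F))).choose 3 : ℝ) ≤
        ((nIn U (K : Set (Fin 3 → F))) : ℝ)^3 := by
      exact_mod_cast Nat.choose_le_pow (nIn U (K : Set (Fin 3 → F))) 3
    have hm0 : (0:ℝ) ≤ ((nIn U (K : Set (Fin 3 → F))) : ℝ) := Nat.cast_nonneg _
    have hmlt := hKsmall K hK
    calc ((Bad.filter (fun (A : Finset (Fin 3 → F)) => affineSpan F (A : Set (Fin 3 → F)) = K)).card : ℝ)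
        ≤ ((nIn U (K : Set (Fin 3 → F))).choose 3 : ℝ) := by exact_mod_cast hcard
      _ ≤ ((nIn U (K : Set (Fin 3 → F))) : ℝ)^3 := hch
      _ ≤ (nIn U (K : Set (Fin 3 → F)) : ℝ) * (1/100 * (n:ℝ) / (q:ℝ))^2 := by
          have hsq : ((nIn U (K : Set (Fin 3 → F)) : ℝ))^2 ≤ (1/100 * (n:ℝ) / (q:ℝ))^2 :=
            pow_le_pow_left₀ hm0 hmlt.le 2
          calc ((nIn U (K : Set (Fin 3 → F)) : ℝ))^3
              = (nIn U (K : Set (Fin 3 → F)) : ℝ) * ((nIn U (K : Set (Fin 3 → F)) : ℝ))^2 := by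
                ring
            _ ≤ (nIn U (K : Set (Fin 3 → F)) : ℝ) * (1/100 * (n:ℝ) / (q:ℝ))^2 :=
                mul_le_mul_of_nonneg_left hsq hm0
  -- sum of plane intersections
  have hplanesum : (∑ K ∈ I, ((nIn U (K : Set (Fin 3 → F))) : ℝ)) ≤
      (n:ℝ) * (3 * (q:ℝ)^2) := by
    have hswap : (∑ K ∈ I, (nIn U (K : Set (Fin 3 → F)) : ℕ)) =
        ∑ p ∈ U, (I.filter (fun K : AffineSubspace F (Fin 3 → F) => p ∈ (K : Set (Fin 3 → F)))).card := by
      calc (∑ K ∈ I, (nIn U (K : Set (Fin 3 → F)) : ℕ))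
          = ∑ K ∈ I, ∑ p ∈ U, (if p ∈ (K : Set (Fin 3 → F)) then 1 else 0) := by
            apply Finset.sum_congr rfl
            intro K _
            rw [nIn_eq, Finset.card_filter]
        _ = ∑ p ∈ U, ∑ K ∈ I, (if p ∈ (K : Set (Fin 3 → F)) then 1 else 0) :=
            Finset.sum_comm
        _ = ∑ p ∈ U, (I.filter (fun K : AffineSubspace F (Fin 3 → F) => p ∈ (K : Set (Fin 3 → F)))).card := by
            apply Finset.sum_congr rfl
            intro p _
            rw [Finset.card_filter]
    have hplanept : ∀ p ∈ U, ((I.filter (fun K : AffineSubspace F (Fin 3 → F) => p ∈ (K : Set (Fin 3 → F)))).card : ℝ) ≤ 3 * (q:ℝ)^2 := by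
      intro p _
      apply planes_through_point p
      · intro K hK
        have hKI : K ∈ I := Finset.mem_of_mem_filter _ hK
        obtain ⟨A, hA, rfl⟩ := Finset.mem_image.1 hKI
        have hAG3 : A ∈ G3 F U := Finset.filter_subset _ _ hA
        obtain ⟨_, hA3, hnl⟩ := hG3elt A hAG3
        exact notline_rank2 hA3 hnl
      · intro K hK
        have := (Finset.mem_filter.1 hK).2
        simpa using this
    calc (∑ K ∈ I, ((nIn U (K : Set (Fin 3 → F))) : ℝ))
        = ((∑ K ∈ I, (nIn U (K : Set (Fin 3 → F)) : ℕ) : ℕ) : ℝ) := by push_cast; ring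
      _ = ((∑ p ∈ U, (I.filter (fun K : AffineSubspace F (Fin 3 → F) => p ∈ (K : Set (Fin 3 → F)))).card : ℕ) : ℝ) := by rw [hswap]
      _ = ∑ p ∈ U, ((I.filter (fun K : AffineSubspace F (Fin 3 → F) => p ∈ (K : Set (Fin 3 → F)))).card : ℝ) := by push_cast; ring
      _ ≤ ∑ p ∈ U, 3 * (q:ℝ)^2 := Finset.sum_le_sum hplanept
      _ = (n:ℝ) * (3 * (q:ℝ)^2) := by rw [Finset.sum_const, nsmul_eq_mul]
  have hBadR : (Bad.card : ℝ) ≤ 3/10000 * (n:ℝ)^3 := by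
    have h1 : (Bad.card : ℝ) ≤ ∑ K ∈ I,
        (nIn U (K : Set (Fin 3 → F)) : ℝ) * (1/100 * (n:ℝ) / (q:ℝ))^2 := by
      rw [hBadsum]
      push_cast
      exact Finset.sum_le_sum hfibBadR
    have h2 : (∑ K ∈ I, (nIn U (K : Set (Fin 3 → F)) : ℝ) * (1/100 * (n:ℝ) / (q:ℝ))^2) =
        (1/100 * (n:ℝ) / (q:ℝ))^2 * ∑ K ∈ I, (nIn U (K : Set (Fin 3 → F)) : ℝ) := by
      rw [Finset.mul_sum]
      apply Finset.sum_congr rfl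
      intro K _
      ring
    have h3 : (1/100 * (n:ℝ) / (q:ℝ))^2 * ((n:ℝ) * (3 * (q:ℝ)^2)) = 3/10000 * (n:ℝ)^3 := by
      field_simp
      ring
    have h4 : (0:ℝ) ≤ (1/100 * (n:ℝ) / (q:ℝ))^2 := sq_nonneg _
    calc (Bad.card : ℝ) ≤ (1/100 * (n:ℝ) / (q:ℝ))^2 *
          ∑ K ∈ I, (nIn U (K : Set (Fin 3 → F)) : ℝ) := by rw [← h2]; exact h1
      _ ≤ (1/100 * (n:ℝ) / (q:ℝ))^2 * ((n:ℝ) * (3 * (q:ℝ)^2)) :=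
          mul_le_mul_of_nonneg_left hplanesum h4
      _ = 3/10000 * (n:ℝ)^3 := h3
  -- conclusion
  have hsplit2R : (Bs.card : ℝ) + (Bad.card : ℝ) = ((G3 F U).card : ℝ) := by
    exact_mod_cast hsplit2
  have : (1:ℝ)/100 * (n:ℝ)^3 ≤ (Bs.card : ℝ) := by nlinarith
  exact_mod_cast this
end
end

section
/- There exist positive constants T and c such that the following holds for every finite field F with |F| = q. For every subset U ⊆ F³ with n := |U| ≥ Tq such that every line of F³ contains at most n/2 points of U, there exists j ∈ {2,3} and a family A ⊆ G_j(U) with |A| ≥ c·n^j such that every A ∈ A satisfies |U ∩ K°_A| ≥ |U ∩ K_A|/10 and |U ∩ K_A| ≥ c·n/q. (Claim 7.) -/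
open Finset

noncomputable section

/-- A finite point set is contained in a flat of dimension `k` in `F³`. -/
def inFlat (F : Type*) [Field F] (k : ℕ) (A : Finset (Fin 3 → F)) : Prop :=
  ∃ W : AffineSubspace F (Fin 3 → F), Module.finrank F W.direction = k ∧ ∀ x ∈ A, x ∈ W

/- `G_j(U)`: the `j`-element subsets of `U` not contained in any `(j-2)`-flat. -/
open Classical in
def Gj (F : Type*) [Field F] (j : ℕ) (U : Finset (Fin 3 → F)) : Finset (Finset (Fin 3 → F)) :=
  (U.powersetCard j).filter (fun A => ¬ inFlat F (j - 2) A)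

/-- `K°_A`: the affine span of `A` with the affine spans of all proper nonempty subsets of
`A` removed. -/
def Kcirc (F : Type*) [Field F] (A : Finset (Fin 3 → F)) : Set (Fin 3 → F) :=
  (affineSpan F (A : Set (Fin 3 → F)) : Set (Fin 3 → F)) \
    ⋃ (B : Finset (Fin 3 → F)) (_ : B ⊂ A ∧ B.Nonempty),
      (affineSpan F (B : Set (Fin 3 → F)) : Set (Fin 3 → F))

/-! Put `t = n / (100 q)` and call a line (plane) rich if it holds at least `t` (`4t`) points
of `U`. If at least `n² / 12` ordered pairs of `U` span rich lines, these pairs are the family for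
`j = 2`: `K°_{x,y}` is the line minus two points. Otherwise, for a typical pair `(x, y)` spanning a
poor line, a typical `z ∈ U` lies off the line `xy` (lines hold at most `n / 2` points of `U`),
spans poor lines with `x` and with `y` (few pairs are rich), and spans a rich plane with them (the
at most `q + 1` poor planes through `xy` hold at most `(q + 1) · 4t ≤ 2n / 25` points of `U`).
These triples are the family for `j = 3`, since the three poor lines remove fewer than `3t` points
from the rich plane. -/

theorem Matrix.range_cons_cons_cons_empty {α : Type*} (x y z : α) :
    Set.range ![x, y, z] = {x, y, z} := by
  rw [Matrix.range_cons, Matrix.range_cons_cons_empty, Set.singleton_union]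

section PointCount

variable {α : Type*} (U : Finset α)
open Classical

theorem nIn_le_add_sum {ι : Type*} {s s₀ : Set α} (I : Finset ι) (f : ι → Set α)
    (h : s ⊆ s₀ ∪ ⋃ i ∈ I, f i) : nIn U s ≤ nIn U s₀ + ∑ i ∈ I, nIn U (f i) := by
  unfold nIn
  calc #{x ∈ U | x ∈ s}
      ≤ #({x ∈ U | x ∈ s₀} ∪ I.biUnion fun i => {x ∈ U | x ∈ f i}) := by
        refine card_le_card fun x hx => ?_
        rw [mem_filter] at hx
        rcases h hx.2 with hx₀ | hxf
        · exact mem_union_left _ (mem_filter.2 ⟨hx.1, hx₀⟩)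
        · obtain ⟨i, hi, hxi⟩ := Set.mem_iUnion₂.1 hxf
          exact mem_union_right _ (mem_biUnion.2 ⟨i, hi, mem_filter.2 ⟨hx.1, hxi⟩⟩)
    _ ≤ _ := (card_union_le _ _).trans (Nat.add_le_add_left card_biUnion_le _)

theorem nIn_mono {s t : Set α} (h : s ⊆ t) : nIn U s ≤ nIn U t :=
  card_le_card (monotone_filter_right _ fun _ _ hx => h hx)

theorem nIn_singleton_le_one (a : α) : nIn U {a} ≤ 1 :=
  card_le_one.2 fun x hx y hy => by
    simp only [mem_filter, Set.mem_singleton_iff] at hx hy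
    rw [hx.2, hy.2]

end PointCount

section AffineGeometry

variable {F V : Type*} [Field F] [AddCommGroup V] [Module F V]

theorem finrank_direction_affineSpan_pair {x y : V} (hxy : x ≠ y) :
    Module.finrank F (affineSpan F {x, y}).direction = 1 := by
  rw [direction_affineSpan, vectorSpan_pair, finrank_span_singleton (vsub_ne_zero.2 hxy)]

theorem affineIndependent_of_notMem_affineSpan_pair {x y z : V} (hxy : x ≠ y)
    (hz : z ∉ affineSpan F {x, y}) : AffineIndependent F ![x, y, z] :=
  affineIndependent_of_ne_of_mem_of_mem_of_notMem hxy (mem_affineSpan F (by simp))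
    (mem_affineSpan F (by simp)) hz

theorem ne_of_notMem_affineSpan_pair {x y z : V} (hz : z ∉ line[F, x, y]) : x ≠ z ∧ y ≠ z :=
  ⟨by rintro rfl; exact hz (mem_affineSpan F (by simp)),
    by rintro rfl; exact hz (mem_affineSpan F (by simp))⟩

theorem finrank_direction_affineSpan_triple {x y z : V} (hxy : x ≠ y)
    (hz : z ∉ affineSpan F {x, y}) :
    Module.finrank F (affineSpan F {x, y, z}).direction = 2 := by
  rw [direction_affineSpan, ← Matrix.range_cons_cons_cons_empty]
  exact (affineIndependent_of_notMem_affineSpan_pair hxy hz).finrank_vectorSpan (by simp)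

theorem affineSpan_triple_eq_of_le {x y z : V} {P : AffineSubspace F V}
    [FiniteDimensional F P.direction] (hxy : x ≠ y) (hz : z ∉ affineSpan F {x, y})
    (hxyP : affineSpan F {x, y} ≤ P) (hzP : z ∈ P) (hP : Module.finrank F P.direction = 2) :
    affineSpan F {x, y, z} = P := by
  rw [← Matrix.range_cons_cons_cons_empty]
  refine (affineIndependent_of_notMem_affineSpan_pair hxy hz)
    |>.affineSpan_eq_of_le_of_card_eq_finrank_add_one ?_ (by simp [hP])
  rw [Matrix.range_cons_cons_cons_empty, affineSpan_le, Set.insert_subset_iff,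
    Set.insert_subset_iff, Set.singleton_subset_iff]
  exact ⟨hxyP (mem_affineSpan F (by simp)), hxyP (mem_affineSpan F (by simp)), hzP⟩

theorem nIn_affineSpan_le_one (U : Finset V) {B : Finset V} (hB : #B ≤ 1) :
    nIn U (affineSpan F (B : Set V)) ≤ 1 := by
  obtain ⟨b, hb⟩ := card_le_one_iff_subset_singleton.1 hB
  calc nIn U (affineSpan F (B : Set V)) ≤ nIn U (affineSpan F {b}) :=
        nIn_mono U (affineSpan_mono F (by exact_mod_cast hb))
    _ ≤ 1 := by rw [AffineSubspace.coe_affineSpan_singleton]; exact nIn_singleton_le_one U b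

variable [Fintype F] [Fintype V]

open Classical in
theorem card_filter_mem_affineSubspace {S : AffineSubspace F V} {p : V} (hp : p ∈ S) :
    #{v | v ∈ S} = Fintype.card F ^ Module.finrank F S.direction := by
  have : Nonempty S := ⟨⟨p, hp⟩⟩
  rw [← Fintype.card_subtype, ← Nat.card_eq_fintype_card, ← Nat.card_eq_fintype_card,
    ← Module.natCard_eq_pow_finrank, Nat.card_congr (Equiv.vaddConst (⟨p, hp⟩ : S))]

end AffineGeometry

section Kcirc

variable {F : Type*} [Field F]
open Classical

theorem affineSpan_subset_Kcirc_union (A : Finset (Fin 3 → F)) :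
    (affineSpan F (A : Set (Fin 3 → F)) : Set (Fin 3 → F)) ⊆
      Kcirc F A ∪ ⋃ a ∈ A, (affineSpan F (A.erase a : Set (Fin 3 → F)) : Set (Fin 3 → F)) := by
  intro w hw
  by_contra hK
  rw [Set.mem_union, not_or] at hK
  obtain ⟨B, ⟨hBA, -⟩, hwB⟩ := Set.mem_iUnion₂.1 (not_and_not_right.1 hK.1 hw)
  obtain ⟨a, haA, haB⟩ := exists_of_ssubset hBA
  have hB : (B : Set (Fin 3 → F)) ⊆ A.erase a := by
    exact_mod_cast subset_erase.2 ⟨hBA.1, haB⟩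
  exact hK.2 (Set.mem_iUnion₂.2 ⟨a, haA, affineSpan_mono F hB hwB⟩)

theorem nIn_affineSpan_le_nIn_Kcirc_add (U A : Finset (Fin 3 → F)) {t : ℝ}
    (h : ∀ a ∈ A, (nIn U (affineSpan F (A.erase a : Set (Fin 3 → F))) : ℝ) ≤ t) :
    (nIn U (affineSpan F (A : Set (Fin 3 → F))) : ℝ) ≤ nIn U (Kcirc F A) + #A * t := by
  have hcover : (nIn U (affineSpan F (A : Set (Fin 3 → F))) : ℝ) ≤
      nIn U (Kcirc F A) + ∑ a ∈ A, (nIn U (affineSpan F (A.erase a : Set (Fin 3 → F))) : ℝ) := by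
    exact_mod_cast nIn_le_add_sum U A _ (affineSpan_subset_Kcirc_union A)
  calc _ ≤ _ := hcover
    _ ≤ nIn U (Kcirc F A) + ∑ _a ∈ A, t := by gcongr with a ha; exact h a ha
    _ = _ := by rw [sum_const, nsmul_eq_mul]

theorem nIn_affineSpan_pair_le_nIn_Kcirc_add_two (U : Finset (Fin 3 → F)) {x y : Fin 3 → F}
    (hxy : x ≠ y) :
    (nIn U (affineSpan F (({x, y} : Finset (Fin 3 → F)) : Set (Fin 3 → F))) : ℝ) ≤
      nIn U (Kcirc F {x, y}) + 2 := by
  have h := nIn_affineSpan_le_nIn_Kcirc_add U {x, y} (t := 1) fun a ha => by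
    exact_mod_cast nIn_affineSpan_le_one U (by rw [card_erase_of_mem ha, card_pair hxy])
  rwa [card_pair hxy, Nat.cast_two, mul_one] at h

theorem nIn_affineSpan_triple_le_nIn_Kcirc_add (U : Finset (Fin 3 → F)) {x y z : Fin 3 → F}
    (hxy : x ≠ y) (hxz : x ≠ z) (hyz : y ≠ z) {t : ℝ} (hxy_t : (nIn U line[F, x, y] : ℝ) ≤ t)
    (hxz_t : (nIn U line[F, x, z] : ℝ) ≤ t) (hyz_t : (nIn U line[F, y, z] : ℝ) ≤ t) :
    (nIn U (affineSpan F (({x, y, z} : Finset (Fin 3 → F)) : Set (Fin 3 → F))) : ℝ) ≤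
      nIn U (Kcirc F {x, y, z}) + 3 * t := by
  have h := nIn_affineSpan_le_nIn_Kcirc_add U {x, y, z} (t := t) fun a ha => by
    simp only [mem_insert, mem_singleton] at ha
    rcases ha with rfl | rfl | rfl
    · simpa [erase_insert, hxy, hxz] using hyz_t
    · simpa [erase_insert_of_ne hxy, hyz] using hxz_t
    · simpa [erase_insert_of_ne hxz, erase_insert_of_ne hyz] using hxy_t
  rwa [card_insert_of_notMem (by simp [hxy, hxz]), card_pair hyz] at h

end Kcirc

section FlatsOfAffineThreeSpace

variable {F : Type*} [Field F]
open Classical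

theorem mem_Gj_of_lt_finrank {U A : Finset (Fin 3 → F)} {j : ℕ} (hAU : A ⊆ U) (hA : #A = j)
    (hdim : j - 2 < Module.finrank F (affineSpan F (A : Set (Fin 3 → F))).direction) :
    A ∈ Gj F j U := by
  refine mem_filter.2 ⟨mem_powersetCard.2 ⟨hAU, hA⟩, fun ⟨W, hW, hAW⟩ => hdim.not_ge ?_⟩
  rw [← hW]
  exact Submodule.finrank_mono (AffineSubspace.direction_le (affineSpan_le.2 hAW))

theorem pair_mem_Gj {U : Finset (Fin 3 → F)} {x y : Fin 3 → F} (hx : x ∈ U) (hy : y ∈ U)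
    (hxy : x ≠ y) : {x, y} ∈ Gj F 2 U := by
  refine mem_Gj_of_lt_finrank (insert_subset hx (singleton_subset_iff.2 hy)) (card_pair hxy) ?_
  rw [coe_pair, finrank_direction_affineSpan_pair hxy]
  norm_num

theorem card_triple_of_notMem_affineSpan_pair {x y z : Fin 3 → F} (hxy : x ≠ y)
    (hz : z ∉ line[F, x, y]) : #({x, y, z} : Finset (Fin 3 → F)) = 3 := by
  obtain ⟨hxz, hyz⟩ := ne_of_notMem_affineSpan_pair hz
  rw [card_insert_of_notMem (by simp [hxy, hxz]), card_pair hyz]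

theorem triple_mem_Gj {U : Finset (Fin 3 → F)} {x y z : Fin 3 → F} (hx : x ∈ U) (hy : y ∈ U)
    (hz : z ∈ U) (hxy : x ≠ y) (hzL : z ∉ line[F, x, y]) : {x, y, z} ∈ Gj F 3 U := by
  refine mem_Gj_of_lt_finrank (by simp [insert_subset_iff, hx, hy, hz])
    (card_triple_of_notMem_affineSpan_pair hxy hzL) ?_
  rw [coe_insert, coe_pair, finrank_direction_affineSpan_triple hxy hzL]
  norm_num

variable [Fintype F]

theorem card_image_affineSpan_triple_le {x y : Fin 3 → F} (hxy : x ≠ y) :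
    #(({z | z ∉ line[F, x, y]} : Finset (Fin 3 → F)).image fun z => affineSpan F {x, y, z}) ≤
      Fintype.card F + 1 := by
  set q := Fintype.card F
  set onL : Finset (Fin 3 → F) := {z | z ∈ line[F, x, y]}
  set offL : Finset (Fin 3 → F) := {z | z ∉ line[F, x, y]}
  have hxL : x ∈ line[F, x, y] := mem_affineSpan F (by simp)
  have honL : #onL = q := by
    rw [card_filter_mem_affineSubspace hxL, finrank_direction_affineSpan_pair hxy, pow_one]
  have hoffL : #offL = q ^ 3 - q := by
    simp only [offL]
    rw [filter_not, card_sdiff_of_subset (filter_subset _ _), honL, card_univ,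
      Fintype.card_fun, Fintype.card_fin]
  have hfiber : ∀ P ∈ offL.image fun z => affineSpan F {x, y, z},
      q ^ 2 - q ≤ #{z ∈ offL | affineSpan F {x, y, z} = P} := by
    intro P hP
    obtain ⟨z₀, hz₀, rfl⟩ := mem_image.1 hP
    have hz₀L : z₀ ∉ line[F, x, y] := (mem_filter.1 hz₀).2
    have hplane := finrank_direction_affineSpan_triple hxy hz₀L
    have hLP : line[F, x, y] ≤ affineSpan F {x, y, z₀} :=
      affineSpan_mono F (Set.insert_subset_insert (by simp))
    set onP : Finset (Fin 3 → F) := {z | z ∈ affineSpan F {x, y, z₀}}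
    calc q ^ 2 - q = #onP - #onL := by
          rw [honL, card_filter_mem_affineSubspace (hLP hxL), hplane]
      _ ≤ #(onP \ onL) := le_card_sdiff _ _
      _ ≤ _ := card_le_card fun z hz => by
          simp only [onP, onL, offL, mem_sdiff, mem_filter, mem_univ, true_and] at hz ⊢
          exact ⟨hz.2, affineSpan_triple_eq_of_le hxy hz.2 hLP hz.1 hplane⟩
  have hmul := mul_card_image_le_card _ _ hfiber
  have hq : 2 ≤ q := Fintype.one_lt_card
  have hfactor : q ^ 3 - q = (q ^ 2 - q) * (q + 1) := by
    zify [Nat.le_self_pow two_ne_zero q, Nat.le_self_pow three_ne_zero q]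
    ring
  rw [hoffL, hfactor] at hmul
  exact Nat.le_of_mul_le_mul_left hmul (Nat.sub_pos_of_lt (by nlinarith))

theorem card_filter_nIn_affineSpan_triple_lt_le (U : Finset (Fin 3 → F)) {x y : Fin 3 → F}
    (hxy : x ≠ y) {s : ℝ} (hs : 0 ≤ s) :
    (#{z ∈ U | z ∉ line[F, x, y] ∧ (nIn U (affineSpan F {x, y, z}) : ℝ) < s} : ℝ) ≤
      (Fintype.card F + 1) * s := by
  set B := {z ∈ U | z ∉ line[F, x, y] ∧ (nIn U (affineSpan F {x, y, z}) : ℝ) < s}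
  set g := fun z => affineSpan F {x, y, z}
  have himage : #(B.image g) ≤ Fintype.card F + 1 := by
    refine (card_le_card (image_subset_image fun z hz => ?_)).trans
      (card_image_affineSpan_triple_le hxy)
    simpa using (mem_filter.1 hz).2.1
  have hfiber : ∀ P ∈ B.image g, (#{z ∈ B | g z = P} : ℝ) ≤ s := by
    intro P hP
    obtain ⟨z₀, hz₀, rfl⟩ := mem_image.1 hP
    refine le_trans ?_ (mem_filter.1 hz₀).2.2.le
    refine Nat.cast_le.2 (card_le_card fun z hz => ?_)
    rw [mem_filter] at hz ⊢
    refine ⟨(mem_filter.1 hz.1).1, ?_⟩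
    have hzP : affineSpan F {x, y, z} = affineSpan F {x, y, z₀} := hz.2
    rw [SetLike.mem_coe, ← hzP]
    exact mem_affineSpan F (by simp)
  calc (#B : ℝ) = ∑ P ∈ B.image g, (#{z ∈ B | g z = P} : ℝ) := by
        exact_mod_cast card_eq_sum_card_image g B
    _ ≤ ∑ _P ∈ B.image g, s := sum_le_sum hfiber
    _ = #(B.image g) * s := by rw [sum_const, nsmul_eq_mul]
    _ ≤ (Fintype.card F + 1) * s := by gcongr; exact_mod_cast himage

end FlatsOfAffineThreeSpace

section RichLines

variable {F : Type*} [Field F] (U : Finset (Fin 3 → F)) (t : ℝ)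
open Classical

def richNeighbors (x : Fin 3 → F) : Finset (Fin 3 → F) :=
  {z ∈ U | t ≤ nIn U line[F, x, z]}

def richPairs : Finset ((Fin 3 → F) × (Fin 3 → F)) :=
  {p ∈ U ×ˢ U | t ≤ nIn U line[F, p.1, p.2]}

def poorPairs : Finset ((Fin 3 → F) × (Fin 3 → F)) :=
  {p ∈ U ×ˢ U | p.1 ≠ p.2 ∧ nIn U line[F, p.1, p.2] < t}

def goodApexes (s : ℝ) (p : (Fin 3 → F) × (Fin 3 → F)) : Finset (Fin 3 → F) :=
  {z ∈ U | z ∉ line[F, p.1, p.2] ∧ nIn U line[F, p.1, z] < t ∧ nIn U line[F, p.2, z] < t ∧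
    s ≤ nIn U (affineSpan F {p.1, p.2, z})}

theorem sum_card_richNeighbors : ∑ x ∈ U, #(richNeighbors U t x) = #(richPairs U t) := by
  rw [richPairs, card_filter, sum_product]
  exact sum_congr rfl fun x _ => by rw [richNeighbors, card_filter]

theorem sum_poorPairs_card_richNeighbors_le :
    ∑ p ∈ poorPairs U t, (#(richNeighbors U t p.1) + #(richNeighbors U t p.2)) ≤
      2 * #U * #(richPairs U t) :=
  calc _ ≤ ∑ p ∈ U ×ˢ U, (#(richNeighbors U t p.1) + #(richNeighbors U t p.2)) :=
        sum_le_sum_of_subset (filter_subset _ _)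
    _ = 2 * #U * #(richPairs U t) := by
        simp only [sum_product, sum_add_distrib, sum_const, smul_eq_mul, ← mul_sum,
          sum_card_richNeighbors]
        ring

theorem sq_card_le_card_poorPairs_add : #U ^ 2 ≤ #(poorPairs U t) + #(richPairs U t) + #U := by
  calc #U ^ 2 = #(U ×ˢ U) := by rw [card_product, sq]
    _ ≤ #(poorPairs U t ∪ richPairs U t ∪ U.diag) := card_le_card fun p hp => by
        by_cases hd : p.1 = p.2
        · exact mem_union_right _ (mem_diag.2 ⟨(mem_product.1 hp).1, hd⟩)
        by_cases hr : t ≤ nIn U line[F, p.1, p.2]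
        · exact mem_union_left _ (mem_union_right _ (mem_filter.2 ⟨hp, hr⟩))
        · exact mem_union_left _ (mem_union_left _ (mem_filter.2 ⟨hp, hd, not_le.1 hr⟩))
    _ ≤ #(poorPairs U t) + #(richPairs U t) + #U := by
        grw [card_union_le, card_union_le, diag_card]

end RichLines

section ApexCount

variable {F : Type*} [Field F] [Fintype F] (U : Finset (Fin 3 → F)) (t : ℝ)
open Classical

theorem card_goodApexes_ge {s : ℝ} (hs : 0 ≤ s) {x y : Fin 3 → F} (hxy : x ≠ y) :
    (#U : ℝ) - nIn U line[F, x, y] - #(richNeighbors U t x) - #(richNeighbors U t y) -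
      (Fintype.card F + 1) * s ≤ #(goodApexes U t s (x, y)) := by
  set poorPlane := {z ∈ U | z ∉ line[F, x, y] ∧ (nIn U (affineSpan F {x, y, z}) : ℝ) < s}
  have hcover : {z ∈ U | z ∉ line[F, x, y]} ⊆ goodApexes U t s (x, y) ∪
      richNeighbors U t x ∪ richNeighbors U t y ∪ poorPlane := by
    intro z hz
    obtain ⟨hzU, hzL⟩ := mem_filter.1 hz
    by_cases hx : t ≤ nIn U line[F, x, z]
    · exact mem_union_left _ (mem_union_left _ (mem_union_right _ (mem_filter.2 ⟨hzU, hx⟩)))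
    by_cases hy : t ≤ nIn U line[F, y, z]
    · exact mem_union_left _ (mem_union_right _ (mem_filter.2 ⟨hzU, hy⟩))
    by_cases hP : s ≤ nIn U (affineSpan F {x, y, z})
    · exact mem_union_left _ (mem_union_left _ (mem_union_left _
        (mem_filter.2 ⟨hzU, hzL, not_le.1 hx, not_le.1 hy, hP⟩)))
    · exact mem_union_right _ (mem_filter.2 ⟨hzU, hzL, not_le.1 hP⟩)
  have hcompl : nIn U line[F, x, y] + #{z ∈ U | z ∉ line[F, x, y]} = #U :=
    card_filter_add_card_filter_not _
  have hunion : #{z ∈ U | z ∉ line[F, x, y]} ≤ #(goodApexes U t s (x, y)) +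
      #(richNeighbors U t x) + #(richNeighbors U t y) + #poorPlane := by
    grw [card_le_card hcover, card_union_le, card_union_le, card_union_le]
  rify at hcompl hunion
  linarith [card_filter_nIn_affineSpan_triple_lt_le U hxy hs]

theorem sum_card_goodApexes_ge {s : ℝ}
    (hline : ∀ L : AffineSubspace F (Fin 3 → F), Module.finrank F L.direction = 1 →
      (nIn U L : ℝ) ≤ #U / 2)
    (hrich : (#(richPairs U t) : ℝ) < #U ^ 2 / 12) (hs : 0 ≤ s)
    (hsU : (Fintype.card F + 1) * s ≤ 2 * #U / 25) (hU : 4 ≤ #U) :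
    (#U : ℝ) ^ 3 / 10 ≤ ∑ p ∈ poorPairs U t, (#(goodApexes U t s p) : ℝ) := by
  have hper : ∀ p ∈ poorPairs U t, 21 / 50 * (#U : ℝ) -
      (#(richNeighbors U t p.1) + #(richNeighbors U t p.2) : ℝ) ≤ #(goodApexes U t s p) := by
    rintro ⟨x, y⟩ hp
    have hxy : x ≠ y := (mem_filter.1 hp).2.1
    have := card_goodApexes_ge U t hs hxy
    have := hline _ (finrank_direction_affineSpan_pair hxy)
    linarith
  have hdeg : ∑ p ∈ poorPairs U t, (#(richNeighbors U t p.1) + #(richNeighbors U t p.2) : ℝ) ≤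
      2 * #U * #(richPairs U t) := by
    exact_mod_cast sum_poorPairs_card_richNeighbors_le U t
  have hpoor : (#U : ℝ) ^ 2 ≤ #(poorPairs U t) + #(richPairs U t) + #U := by
    exact_mod_cast sq_card_le_card_poorPairs_add U t
  have hn : (4 : ℝ) ≤ #U := by exact_mod_cast hU
  set n : ℝ := (#U : ℝ)
  calc n ^ 3 / 10 ≤ #(poorPairs U t) * (21 / 50 * n) - 2 * n * #(richPairs U t) := by
        nlinarith [mul_le_mul_of_nonneg_right hpoor (by positivity : (0 : ℝ) ≤ 21 / 50 * n),
          mul_lt_mul_of_pos_left hrich (by positivity : (0 : ℝ) < n)]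
    _ ≤ ∑ p ∈ poorPairs U t, (21 / 50 * n -
          (#(richNeighbors U t p.1) + #(richNeighbors U t p.2) : ℝ)) := by
        rw [sum_sub_distrib, sum_const, nsmul_eq_mul]
        linarith
    _ ≤ _ := sum_le_sum hper

end ApexCount

section Families

variable {F : Type*} [Field F] (U : Finset (Fin 3 → F)) (t : ℝ)
open Classical

theorem exists_pair_family (ht : 3 ≤ t) :
    ∃ 𝒜 ⊆ Gj F 2 U, #(richPairs U t) ≤ 4 * #𝒜 ∧ ∀ A ∈ 𝒜,
      (nIn U (affineSpan F (A : Set (Fin 3 → F))) : ℝ) / 10 ≤ nIn U (Kcirc F A) ∧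
      t ≤ nIn U (affineSpan F (A : Set (Fin 3 → F))) := by
  have hne : ∀ p ∈ richPairs U t, p.1 ≠ p.2 := by
    rintro ⟨x, y⟩ hp (rfl : x = y)
    have hrich : t ≤ nIn U line[F, x, x] := (mem_filter.1 hp).2
    have hle : nIn U line[F, x, x] ≤ 1 := by
      rw [Set.pair_eq_singleton, AffineSubspace.coe_affineSpan_singleton]
      exact nIn_singleton_le_one U x
    have : (nIn U line[F, x, x] : ℝ) ≤ 1 := by exact_mod_cast hle
    linarith
  refine ⟨(richPairs U t).image fun p => {p.1, p.2}, ?_, ?_, ?_⟩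
  · intro A hA
    obtain ⟨p, hp, rfl⟩ := mem_image.1 hA
    have hpU := mem_product.1 (mem_filter.1 hp).1
    exact pair_mem_Gj hpU.1 hpU.2 (hne p hp)
  · refine card_le_mul_card_image _ 4 fun A hA => ?_
    obtain ⟨p, hp, rfl⟩ := mem_image.1 hA
    calc #{p' ∈ richPairs U t | ({p'.1, p'.2} : Finset _) = {p.1, p.2}}
        ≤ #(({p.1, p.2} : Finset _) ×ˢ ({p.1, p.2} : Finset _)) := card_le_card fun p' hp' => by
          rw [mem_filter] at hp'
          rw [mem_product, ← hp'.2]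
          simp
      _ = 4 := by rw [card_product, card_pair (hne p hp)]
  · intro A hA
    obtain ⟨p, hp, rfl⟩ := mem_image.1 hA
    have hrich : t ≤ nIn U (affineSpan F (({p.1, p.2} : Finset _) : Set (Fin 3 → F))) := by
      rw [coe_pair]
      exact (mem_filter.1 hp).2
    have hK := nIn_affineSpan_pair_le_nIn_Kcirc_add_two U (hne p hp)
    exact ⟨by linarith, hrich⟩

theorem of_mem_sigma_goodApexes {s : ℝ} {w : Σ _ : (Fin 3 → F) × (Fin 3 → F), Fin 3 → F}
    (hw : w ∈ (poorPairs U t).sigma (goodApexes U t s)) :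
    (w.1.1 ∈ U ∧ w.1.2 ∈ U ∧ w.2 ∈ U) ∧ w.1.1 ≠ w.1.2 ∧ w.2 ∉ line[F, w.1.1, w.1.2] ∧
      (nIn U line[F, w.1.1, w.1.2] < t ∧ nIn U line[F, w.1.1, w.2] < t ∧
        nIn U line[F, w.1.2, w.2] < t) ∧ s ≤ nIn U (affineSpan F {w.1.1, w.1.2, w.2}) := by
  simp only [mem_sigma, poorPairs, goodApexes, mem_filter, mem_product] at hw
  tauto

theorem exists_triple_family {s : ℝ} (hts : 10 * t ≤ 3 * s) :
    ∃ 𝒜 ⊆ Gj F 3 U, ∑ p ∈ poorPairs U t, #(goodApexes U t s p) ≤ 27 * #𝒜 ∧ ∀ A ∈ 𝒜,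
      (nIn U (affineSpan F (A : Set (Fin 3 → F))) : ℝ) / 10 ≤ nIn U (Kcirc F A) ∧
      s ≤ nIn U (affineSpan F (A : Set (Fin 3 → F))) := by
  set W := (poorPairs U t).sigma (goodApexes U t s)
  set f : (Σ _ : (Fin 3 → F) × (Fin 3 → F), Fin 3 → F) → Finset (Fin 3 → F) :=
    fun w => {w.1.1, w.1.2, w.2}
  refine ⟨W.image f, ?_, ?_, ?_⟩
  · intro A hA
    obtain ⟨w, hw, rfl⟩ := mem_image.1 hA
    obtain ⟨⟨hx, hy, hz⟩, hxy, hzL, -⟩ := of_mem_sigma_goodApexes U t hw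
    exact triple_mem_Gj hx hy hz hxy hzL
  · rw [← card_sigma]
    refine card_le_mul_card_image _ 27 fun A hA => ?_
    obtain ⟨w, hw, rfl⟩ := mem_image.1 hA
    obtain ⟨-, hxy, hzL, -⟩ := of_mem_sigma_goodApexes U t hw
    calc #{w' ∈ W | f w' = f w} ≤ #((f w ×ˢ f w).sigma fun _ => f w) :=
          card_le_card fun w' hw' => by
            rw [mem_filter] at hw'
            simp only [mem_sigma, mem_product, ← hw'.2, f]
            simp
      _ = 27 := by
          simp [f, card_sigma, card_product, card_triple_of_notMem_affineSpan_pair hxy hzL]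
  · intro A hA
    obtain ⟨w, hw, rfl⟩ := mem_image.1 hA
    obtain ⟨-, hxy, hzL, ⟨hxy_t, hxz_t, hyz_t⟩, hplane⟩ := of_mem_sigma_goodApexes U t hw
    obtain ⟨hxz, hyz⟩ := ne_of_notMem_affineSpan_pair hzL
    have hK := nIn_affineSpan_triple_le_nIn_Kcirc_add U hxy hxz hyz hxy_t.le hxz_t.le hyz_t.le
    have hplane' : s ≤ nIn U (affineSpan F (f w : Set (Fin 3 → F))) := by
      simpa [f] using hplane
    exact ⟨by linarith, hplane'⟩

end Families

/-- Claim 7. -/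
theorem stmt2 :
    ∃ T c : ℝ, 0 < T ∧ 0 < c ∧
      ∀ (F : Type) [Field F] [Fintype F],
        ∀ U : Finset (Fin 3 → F),
          T * (Fintype.card F : ℝ) ≤ (U.card : ℝ) →
          (∀ L : AffineSubspace F (Fin 3 → F), Module.finrank F L.direction = 1 →
            (nIn U (L : Set (Fin 3 → F)) : ℝ) ≤ (U.card : ℝ) / 2) →
          ∃ j : ℕ, (j = 2 ∨ j = 3) ∧
            ∃ 𝒜 ⊆ Gj F j U,
              c * (U.card : ℝ) ^ j ≤ (𝒜.card : ℝ) ∧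
              ∀ A ∈ 𝒜,
                (nIn U (affineSpan F (A : Set (Fin 3 → F)) : Set (Fin 3 → F)) : ℝ) / 10 ≤
                  (nIn U (Kcirc F A) : ℝ) ∧
                c * (U.card : ℝ) / (Fintype.card F : ℝ) ≤
                  (nIn U (affineSpan F (A : Set (Fin 3 → F)) : Set (Fin 3 → F)) : ℝ) := by
  refine ⟨1000000, 1 / 1000, by norm_num, by norm_num, fun F _ _ U hUq hline => ?_⟩
  have hq : (2 : ℝ) ≤ Fintype.card F := by exact_mod_cast Fintype.one_lt_card
  set t : ℝ := #U / (100 * Fintype.card F)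
  have ht : 3 ≤ t := by rw [le_div_iff₀ (by positivity)]; linarith
  have hct : 1 / 1000 * (#U : ℝ) / Fintype.card F ≤ t := by
    rw [div_le_div_iff₀ (by positivity) (by positivity)]
    nlinarith
  by_cases hrich : (#U : ℝ) ^ 2 / 12 ≤ #(richPairs U t)
  · obtain ⟨𝒜, h𝒜, hcard, hgood⟩ := exists_pair_family U t ht
    have hcard' : (#(richPairs U t) : ℝ) ≤ 4 * #𝒜 := by exact_mod_cast hcard
    exact ⟨2, Or.inl rfl, 𝒜, h𝒜, by linarith, fun A hA => (hgood A hA).imp_right hct.trans⟩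
  · have hqt : (Fintype.card F : ℝ) * t = #U / 100 := by
      simp only [t]
      field_simp
    have hsU : (Fintype.card F + 1) * (4 * t) ≤ 2 * #U / 25 := by nlinarith
    have hsum := sum_card_goodApexes_ge U t hline (not_le.1 hrich) (by positivity) hsU
      (by exact_mod_cast (by linarith : (4 : ℝ) ≤ #U))
    obtain ⟨𝒜, h𝒜, hcard, hgood⟩ := exists_triple_family U t (s := 4 * t) (by linarith)
    have hcard' : ∑ p ∈ poorPairs U t, (#(goodApexes U t (4 * t) p) : ℝ) ≤ 27 * #𝒜 := by
      exact_mod_cast hcard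
    exact ⟨3, Or.inr rfl, 𝒜, h𝒜, by linarith,
      fun A hA => (hgood A hA).imp_right fun h => by linarith⟩
end
end

section
/- For every constant c > 0 there exist positive constants c', C and q₀ such that the following holds for every finite field F with |F| = q ≥ q₀. For every subset U ⊆ F³ with n := |U| ≥ q such that |S₄(U)| ≥ c·n⁴, there exists a collection H ⊆ S₄(U) with |H| ≥ c'·n⁴/q, Δ₁(H) ≤ C·n³/q, Δ₂(H) ≤ C·n²/q^{2/3}, and Δ₃(H) ≤ C·n/q^{1/3}. (Dense case of the proof of Theorem 4, obtained by keeping each member of S₄(U) independently with probability 1/q.) -/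
/-!
Take `H ⊆ S₄(U)` of maximum size subject to the caps `d_H(S) ≤ 2 tₖ` for the `k`-sets `S`,
`k = 1, 2, 3`, where `tₖ = (n / q^{1/3})^{4-k} ≥ 1`. A member of `S₄(U)` outside `H` cannot be
added, so it contains a `k`-set of degree at least `2 tₖ - 1 ≥ tₖ` in `H`. By double counting there
are at most `C(4,k) |H| / tₖ` such heavy `k`-sets, each lying in at most `n^{4-k}` members of
`S₄(U)`, and `n^{4-k} / tₖ = q^{(4-k)/3} ≤ q`. Hence `c n⁴ ≤ |S₄(U)| ≤ 15 q |H|`.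
-/

open Finset

noncomputable section

def inPlane (F : Type*) [Field F] (A : Finset (Fin 3 → F)) : Prop :=
  ∃ P : AffineSubspace F (Fin 3 → F), Module.finrank F P.direction = 2 ∧ ∀ x ∈ A, x ∈ P

open Classical in
def S4 (F : Type*) [Field F] (U : Finset (Fin 3 → F)) : Finset (Finset (Fin 3 → F)) :=
  (U.powersetCard 4).filter (fun A => inPlane F A)

open Classical in
def deg {α : Type*} (H : Finset (Finset α)) (S : Finset α) : ℕ :=
  (H.filter (fun E => S ⊆ E)).card

section DegreeCaps

variable {α : Type*}

def IsDegreeCapped (U : Finset α) (K : Finset ℕ) (cap : ℕ → ℝ) (H : Finset (Finset α)) : Prop :=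
  ∀ k ∈ K, ∀ S ⊆ U, #S = k → (deg H S : ℝ) ≤ cap k

def heavySets (U : Finset α) (H : Finset (Finset α)) (k : ℕ) (t : ℝ) : Finset (Finset α) :=
  {S ∈ U.powersetCard k | t ≤ deg H S}

lemma deg_eq_card_filter [DecidableEq α] (H : Finset (Finset α)) (S : Finset α) :
    deg H S = #{E ∈ H | S ⊆ E} := by
  unfold deg
  congr!

lemma deg_empty (S : Finset α) : deg (∅ : Finset (Finset α)) S = 0 := by
  simp [deg]

lemma deg_insert_le [DecidableEq α] (H : Finset (Finset α)) (A S : Finset α) :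
    deg (insert A H) S ≤ deg H S + 1 := by
  unfold deg
  rw [filter_insert]
  split_ifs
  · exact card_insert_le _ _
  · omega

lemma deg_insert_of_not_subset [DecidableEq α] (H : Finset (Finset α)) {A S : Finset α}
    (hSA : ¬ S ⊆ A) : deg (insert A H) S = deg H S := by
  unfold deg
  rw [filter_insert, if_neg hSA]

lemma deg_le_pow [DecidableEq α] {U : Finset α} {𝒮 : Finset (Finset α)} {r : ℕ}
    (h𝒮 : 𝒮 ⊆ U.powersetCard r) (S : Finset α) : deg 𝒮 S ≤ #U ^ (r - #S) := by
  rw [deg_eq_card_filter]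
  calc #{E ∈ 𝒮 | S ⊆ E} ≤ #(U.powersetCard (r - #S)) := by
        refine card_le_card_of_injOn (· \ S) (fun A hA => ?_) (fun A hA B hB hAB => ?_)
        · obtain ⟨hA𝒮, hSA⟩ := mem_filter.1 hA
          obtain ⟨hAU, hAr⟩ := mem_powersetCard.1 (h𝒮 hA𝒮)
          exact mem_powersetCard.2 ⟨sdiff_subset.trans hAU, by rw [card_sdiff_of_subset hSA, hAr]⟩
        · have hSA := (mem_filter.1 hA).2
          have hSB := (mem_filter.1 hB).2
          rw [← union_sdiff_of_subset hSA, ← union_sdiff_of_subset hSB]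
          exact congrArg (S ∪ ·) hAB
    _ = (#U).choose (r - #S) := card_powersetCard _ _
    _ ≤ #U ^ (r - #S) := Nat.choose_le_pow _ _

lemma sum_deg_powersetCard (U : Finset α) {H : Finset (Finset α)} {r : ℕ}
    (hH : H ⊆ U.powersetCard r) (k : ℕ) :
    ∑ S ∈ U.powersetCard k, deg H S = r.choose k * #H := by
  classical
  calc ∑ S ∈ U.powersetCard k, deg H S
      = ∑ S ∈ U.powersetCard k, #(H.bipartiteAbove (· ⊆ ·) S) := by
        simp only [deg_eq_card_filter, bipartiteAbove]
    _ = ∑ A ∈ H, #((U.powersetCard k).bipartiteBelow (· ⊆ ·) A) :=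
        sum_card_bipartiteAbove_eq_sum_card_bipartiteBelow _
    _ = ∑ _A ∈ H, r.choose k := sum_congr rfl fun A hA => by
        obtain ⟨hAU, hAr⟩ := mem_powersetCard.1 (hH hA)
        have : (U.powersetCard k).bipartiteBelow (· ⊆ ·) A = A.powersetCard k := by
          ext S
          simp only [bipartiteBelow, mem_filter, mem_powersetCard]
          exact ⟨fun h => ⟨h.2, h.1.2⟩, fun h => ⟨⟨h.1.trans hAU, h.2⟩, h.1⟩⟩
        rw [this, card_powersetCard, hAr]
    _ = r.choose k * #H := by rw [sum_const, smul_eq_mul, mul_comm]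

lemma card_heavySets_mul_le (U : Finset α) {H : Finset (Finset α)} {r : ℕ}
    (hH : H ⊆ U.powersetCard r) (k : ℕ) (t : ℝ) :
    #(heavySets U H k t) * t ≤ r.choose k * #H := by
  calc #(heavySets U H k t) * t = ∑ _S ∈ heavySets U H k t, t := by
        rw [sum_const, nsmul_eq_mul]
    _ ≤ ∑ S ∈ heavySets U H k t, (deg H S : ℝ) := sum_le_sum fun S hS => (mem_filter.1 hS).2
    _ ≤ ∑ S ∈ U.powersetCard k, (deg H S : ℝ) :=
        sum_le_sum_of_subset_of_nonneg (filter_subset _ _) fun _ _ _ => Nat.cast_nonneg _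
    _ = r.choose k * #H := by exact_mod_cast sum_deg_powersetCard U hH k

variable {U : Finset α} {K : Finset ℕ} {t : ℕ → ℝ}

lemma isDegreeCapped_empty (ht : ∀ k ∈ K, 1 ≤ t k) :
    IsDegreeCapped U K (fun k => 2 * t k) ∅ := fun k hk S _ _ => by
  rw [deg_empty, Nat.cast_zero]
  linarith [ht k hk]

variable [DecidableEq α]

lemma exists_heavySets_of_not_isDegreeCapped_insert {H : Finset (Finset α)} {A : Finset α}
    (ht : ∀ k ∈ K, 1 ≤ t k) (hH : IsDegreeCapped U K (fun k => 2 * t k) H)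
    (hA : ¬ IsDegreeCapped U K (fun k => 2 * t k) (insert A H)) :
    ∃ k ∈ K, ∃ S ∈ heavySets U H k (t k), S ⊆ A := by
  simp only [IsDegreeCapped, not_forall, not_le, exists_prop] at hA
  obtain ⟨k, hk, S, hSU, hSk, hcap⟩ := hA
  by_cases hSA : S ⊆ A
  · have hdeg : (deg (insert A H) S : ℝ) ≤ deg H S + 1 := by exact_mod_cast deg_insert_le H A S
    refine ⟨k, hk, S, mem_filter.2 ⟨mem_powersetCard.2 ⟨hSU, hSk⟩, ?_⟩, hSA⟩
    linarith [ht k hk]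
  · rw [deg_insert_of_not_subset H hSA] at hcap
    exact absurd (hH k hk S hSU hSk) (not_le.2 hcap)

lemma card_sdiff_le_of_forall_not_isDegreeCapped_insert {𝒮 H : Finset (Finset α)} {r : ℕ}
    (h𝒮 : 𝒮 ⊆ U.powersetCard r) (ht : ∀ k ∈ K, 1 ≤ t k)
    (hH : IsDegreeCapped U K (fun k => 2 * t k) H)
    (hmax : ∀ A ∈ 𝒮 \ H, ¬ IsDegreeCapped U K (fun k => 2 * t k) (insert A H)) :
    #(𝒮 \ H) ≤ ∑ k ∈ K, #(heavySets U H k (t k)) * #U ^ (r - k) := by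
  have hcover :
      𝒮 \ H ⊆ K.biUnion fun k => (heavySets U H k (t k)).biUnion fun S => {E ∈ 𝒮 | S ⊆ E} := by
    intro A hA
    obtain ⟨k, hk, S, hS, hSA⟩ := exists_heavySets_of_not_isDegreeCapped_insert ht hH (hmax A hA)
    exact mem_biUnion.2 ⟨k, hk, mem_biUnion.2 ⟨S, hS, mem_filter.2 ⟨(mem_sdiff.1 hA).1, hSA⟩⟩⟩
  calc #(𝒮 \ H) ≤ ∑ k ∈ K, #((heavySets U H k (t k)).biUnion fun S => {E ∈ 𝒮 | S ⊆ E}) :=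
        (card_le_card hcover).trans card_biUnion_le
    _ ≤ ∑ k ∈ K, ∑ S ∈ heavySets U H k (t k), #U ^ (r - k) := sum_le_sum fun k _ => by
        refine card_biUnion_le.trans (sum_le_sum fun S hS => ?_)
        rw [← deg_eq_card_filter, ← (mem_powersetCard.1 (mem_filter.1 hS).1).2]
        exact deg_le_pow h𝒮 S
    _ = ∑ k ∈ K, #(heavySets U H k (t k)) * #U ^ (r - k) := by simp only [sum_const, smul_eq_mul]

theorem exists_isDegreeCapped_card_le {𝒮 : Finset (Finset α)} {r : ℕ}
    (h𝒮 : 𝒮 ⊆ U.powersetCard r) {w : ℝ} (ht : ∀ k ∈ K, 1 ≤ t k)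
    (hw : ∀ k ∈ K, (#U : ℝ) ^ (r - k) ≤ w * t k) :
    ∃ H ⊆ 𝒮, IsDegreeCapped U K (fun k => 2 * t k) H ∧
      (#𝒮 : ℝ) ≤ (1 + w * ∑ k ∈ K, (r.choose k : ℝ)) * #H := by
  classical
  obtain ⟨H, hHmem, hHmax⟩ :=
    exists_max_image {H ∈ 𝒮.powerset | IsDegreeCapped U K (fun k => 2 * t k) H} card
      ⟨∅, mem_filter.2 ⟨empty_mem_powerset _, isDegreeCapped_empty ht⟩⟩
  obtain ⟨hH𝒮, hH⟩ := mem_filter.1 hHmem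
  rw [mem_powerset] at hH𝒮
  have hmax : ∀ A ∈ 𝒮 \ H, ¬ IsDegreeCapped U K (fun k => 2 * t k) (insert A H) := by
    intro A hA hcap
    obtain ⟨hA𝒮, hAH⟩ := mem_sdiff.1 hA
    have := hHmax _ (mem_filter.2 ⟨mem_powerset.2 (insert_subset hA𝒮 hH𝒮), hcap⟩)
    rw [card_insert_of_notMem hAH] at this
    omega
  have hheavy : ∀ k ∈ K,
      (#(heavySets U H k (t k)) * #U ^ (r - k) : ℝ) ≤ w * (r.choose k * #H) := by
    intro k hk
    have hw0 : 0 ≤ w := nonneg_of_mul_nonneg_left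
      ((pow_nonneg (Nat.cast_nonneg _) _).trans (hw k hk)) (zero_lt_one.trans_le (ht k hk))
    calc (#(heavySets U H k (t k)) * #U ^ (r - k) : ℝ)
        ≤ #(heavySets U H k (t k)) * (w * t k) := by gcongr; exact hw k hk
      _ = w * (#(heavySets U H k (t k)) * t k) := by ring
      _ ≤ w * (r.choose k * #H) :=
          mul_le_mul_of_nonneg_left (card_heavySets_mul_le U (hH𝒮.trans h𝒮) k (t k)) hw0
  refine ⟨H, hH𝒮, hH, ?_⟩
  calc (#𝒮 : ℝ) = #(𝒮 \ H) + #H := by exact_mod_cast (card_sdiff_add_card_eq_card hH𝒮).symm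
    _ ≤ ∑ k ∈ K, (#(heavySets U H k (t k)) * #U ^ (r - k) : ℝ) + #H := by
        gcongr
        exact_mod_cast card_sdiff_le_of_forall_not_isDegreeCapped_insert h𝒮 ht hH hmax
    _ ≤ ∑ k ∈ K, w * (r.choose k * #H) + #H := add_le_add_left (sum_le_sum hheavy) _
    _ = (1 + w * ∑ k ∈ K, (r.choose k : ℝ)) * #H := by rw [← mul_sum, ← sum_mul]; ring

end DegreeCaps

section OneThirdPowers

variable {q : ℝ}

lemma div_rpow_one_third_pow (hq : 0 ≤ q) (n : ℝ) (j : ℕ) :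
    (n / q ^ (1 / 3 : ℝ)) ^ j = n ^ j / q ^ ((j : ℝ) / 3) := by
  rw [div_pow, ← Real.rpow_natCast (q ^ _), ← Real.rpow_mul hq]
  ring_nf

lemma rpow_natCast_div_three_le_self (hq : 1 ≤ q) {j : ℕ} (hj : j ≤ 3) :
    q ^ ((j : ℝ) / 3) ≤ q := by
  refine (Real.rpow_le_rpow_of_exponent_le hq ?_).trans_eq (Real.rpow_one q)
  rw [div_le_one three_pos]
  exact_mod_cast hj

lemma one_le_div_rpow_one_third (hq : 1 ≤ q) {n : ℝ} (hqn : q ≤ n) : 1 ≤ n / q ^ (1 / 3 : ℝ) := by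
  rw [le_div_iff₀ (by positivity), one_mul]
  simpa using (rpow_natCast_div_three_le_self hq (j := 1) (by norm_num)).trans hqn

lemma pow_le_mul_div_rpow_one_third_pow (hq : 1 ≤ q) {n : ℝ} (hn : 0 ≤ n) {j : ℕ} (hj : j ≤ 3) :
    n ^ j ≤ q * (n / q ^ (1 / 3 : ℝ)) ^ j := by
  have hq0 : 0 < q ^ ((j : ℝ) / 3) := by positivity
  rw [div_rpow_one_third_pow (by positivity), mul_div_assoc', le_div_iff₀ hq0, mul_comm]
  exact mul_le_mul_of_nonneg_right (rpow_natCast_div_three_le_self hq hj) (pow_nonneg hn j)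

end OneThirdPowers
/-- Dense case of the proof of Theorem 4. -/
theorem stmt3 (c : ℝ) (hc : 0 < c) :
    ∃ c' C : ℝ, 0 < c' ∧ 0 < C ∧ ∃ q₀ : ℕ,
      ∀ (F : Type) [Field F] [Fintype F],
        q₀ ≤ Fintype.card F →
        ∀ U : Finset (Fin 3 → F),
          Fintype.card F ≤ U.card →
          c * (U.card : ℝ) ^ 4 ≤ ((S4 F U).card : ℝ) →
          ∃ H : Finset (Finset (Fin 3 → F)), H ⊆ S4 F U ∧
            c' * (U.card : ℝ) ^ 4 / (Fintype.card F : ℝ) ≤ (H.card : ℝ) ∧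
            (∀ S ⊆ U, S.card = 1 →
              (deg H S : ℝ) ≤ C * (U.card : ℝ) ^ 3 / (Fintype.card F : ℝ)) ∧
            (∀ S ⊆ U, S.card = 2 →
              (deg H S : ℝ) ≤ C * (U.card : ℝ) ^ 2 / (Fintype.card F : ℝ) ^ ((2:ℝ)/3)) ∧
            (∀ S ⊆ U, S.card = 3 →
              (deg H S : ℝ) ≤ C * (U.card : ℝ) / (Fintype.card F : ℝ) ^ ((1:ℝ)/3)) := by
  classical
  refine ⟨c / 15, 2, by positivity, two_pos, 1, fun F _ _ _ U hqn hS4 => ?_⟩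
  have hq : (1 : ℝ) ≤ Fintype.card F := Nat.one_le_cast.2 Fintype.card_pos
  have hqn : (Fintype.card F : ℝ) ≤ #U := Nat.cast_le.2 hqn
  set q : ℝ := (Fintype.card F : ℝ)
  set n : ℝ := (#U : ℝ)
  have hK : ∀ k ∈ ({1, 2, 3} : Finset ℕ), 4 - k ≤ 3 := by decide
  obtain ⟨H, hH, hcap, hcard⟩ := exists_isDegreeCapped_card_le (𝒮 := S4 F U) (K := {1, 2, 3})
    (t := fun k => (n / q ^ (1 / 3 : ℝ)) ^ (4 - k)) (w := q) (filter_subset _ _)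
    (fun k _ => one_le_pow₀ (one_le_div_rpow_one_third hq hqn))
    (fun k hk => pow_le_mul_div_rpow_one_third_pow hq (Nat.cast_nonneg _) (hK k hk))
  have h14 : ∑ k ∈ ({1, 2, 3} : Finset ℕ), ((Nat.choose 4 k : ℕ) : ℝ) = 14 := by
    norm_num [Nat.choose]
  have hdeg (k : ℕ) (hk : k ∈ ({1, 2, 3} : Finset ℕ)) (S : Finset (Fin 3 → F)) (hSU : S ⊆ U)
      (hS : #S = k) : (deg H S : ℝ) ≤ 2 * n ^ (4 - k) / q ^ (((4 - k : ℕ) : ℝ) / 3) := by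
    rw [mul_div_assoc, ← div_rpow_one_third_pow (by positivity)]
    exact hcap k hk S hSU hS
  refine ⟨H, hH, ?_, fun S hSU hS => ?_, fun S hSU hS => ?_, fun S hSU hS => ?_⟩
  · rw [h14] at hcard
    rw [div_le_iff₀ (by positivity)]
    nlinarith [mul_le_mul_of_nonneg_right hq (Nat.cast_nonneg (α := ℝ) #H)]
  · simpa using hdeg 1 (by simp) S hSU hS
  · simpa using hdeg 2 (by simp) S hSU hS
  · simpa using hdeg 3 (by simp) S hSU hS
end
end

section
/- For every integer d ≥ 2 and every ε > 0 there exists K > 0 such that the following holds. For every finite field F with |F| = q and every p ∈ [0,1] with p·q ≥ K, the probability that the p-random subset of F^d contains a set in general position of size at least p·q/2 is at least 1 − ε. (Claim 10.) -/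
open Finset

noncomputable section

/-- A set `S ⊆ F^d` is in general position if no `d+1` points of `S` lie in a common
affine subspace of dimension `d-1`. -/
def GenPos (F : Type*) [Field F] (d : ℕ) (S : Set (Fin d → F)) : Prop :=
  ∀ A : Finset (Fin d → F), ↑A ⊆ S → A.card = d + 1 →
    ¬ ∃ W : AffineSubspace F (Fin d → F),
        Module.finrank F W.direction = d - 1 ∧ ∀ x ∈ A, x ∈ W

/- The probability, under the product Bernoulli(`p`) measure on subsets of `α`, of the
event `E`. -/
open Classical in
def randProb (α : Type*) [Fintype α] (p : ℝ) (E : Finset α → Prop) : ℝ :=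
  ∑ A : Finset α, if E A then p ^ A.card * (1 - p) ^ (Fintype.card α - A.card) else 0

/-!
The points of the moment curve `t ↦ (t, t², …, t^d)` are in general position: if `d + 1` of them
lie in a hyperplane then the weights of an affine dependence form a vector killed by an invertible
Vandermonde matrix. A `p`-random subset of `F^d` meets this curve of `q` points in a
binomially distributed number of points, of mean `qp` and variance `qp(1 - p)`, so by Chebyshev's
inequality it keeps at least `qp/2` of them with probability at least `1 - 4/(qp) ≥ 1 - ε` as soon
as `qp ≥ 4/ε`.
-/

theorem AffineIndependent.le_finrank_direction {k V ι : Type*} [Field k] [AddCommGroup V]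
    [Module k V] [FiniteDimensional k V] [Fintype ι] {p : ι → V} (hp : AffineIndependent k p)
    {n : ℕ} (hc : Fintype.card ι = n + 1) {W : AffineSubspace k V} (hW : ∀ i, p i ∈ W) :
    n ≤ Module.finrank k W.direction := by
  rw [← hp.finrank_vectorSpan hc]
  exact Submodule.finrank_mono (vectorSpan_mono k (Set.range_subset_iff.2 hW))

section MomentCurve

variable {F : Type*} [Field F] {d : ℕ}

def momentCurve (F : Type*) [Field F] (d : ℕ) (t : F) : Fin d → F := fun i => t ^ (i.val + 1)

theorem momentCurve_injective (hd : 0 < d) : Function.Injective (momentCurve F d) :=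
  fun s t hst => by simpa [momentCurve] using congrFun hst ⟨0, hd⟩

theorem affineIndependent_momentCurve {ι : Type*} [Fintype ι] {t : ι → F}
    (ht : Function.Injective t) (hcard : Fintype.card ι ≤ d + 1) :
    AffineIndependent F (momentCurve F d ∘ t) := by
  rw [affineIndependent_iff_of_fintype]
  intro w hw₀ hw₁
  rw [weightedVSub_eq_linear_combination _ hw₀] at hw₁
  have hmoment : ∀ k ≤ d, ∑ i, w i * t i ^ k = 0 := by
    rintro (_ | k) hk
    · simpa using hw₀
    · simpa [momentCurve] using congrFun hw₁ ⟨k, hk⟩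
  let e := Fintype.equivFin ι
  have hw : w ∘ e.symm = 0 :=
    Matrix.eq_zero_of_forall_pow_sum_mul_pow_eq_zero (ht.comp e.symm.injective) fun j =>
      (e.symm.sum_comp fun i => w i * t i ^ (j : ℕ)).trans (hmoment j (by omega))
  intro i
  simpa using congrFun hw (e i)

theorem genPos_of_forall_affineIndependent (hd : 0 < d) {S : Set (Fin d → F)}
    (hS : ∀ A : Finset (Fin d → F), ↑A ⊆ S → #A = d + 1 →
      AffineIndependent F ((↑) : A → Fin d → F)) :
    GenPos F d S := by
  rintro A hAS hA ⟨W, hW, hAW⟩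
  have := (hS A hAS hA).le_finrank_direction (by simpa using hA) (W := W) fun x => hAW x x.2
  omega

theorem genPos_of_subset_range_momentCurve (hd : 0 < d) {S : Set (Fin d → F)}
    (hS : S ⊆ Set.range (momentCurve F d)) : GenPos F d S := by
  refine genPos_of_forall_affineIndependent hd fun A hAS hA => ?_
  choose t ht using fun x : A => hS (hAS x.2)
  have hcurve : momentCurve F d ∘ t = (↑) := funext ht
  rw [← hcurve]
  exact affineIndependent_momentCurve (hcurve ▸ Subtype.val_injective).of_comp (by simp [hA])

end MomentCurve

section Binomial

variable (n : ℕ)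

theorem sum_range_choose_mul_pow_mul_pow_sub (p : ℝ) :
    ∑ k ∈ range (n + 1), n.choose k * p ^ k * (1 - p) ^ (n - k) = 1 := by
  simpa [Polynomial.eval_finsetSum, bernsteinPolynomial] using
    congrArg (Polynomial.eval p) (bernsteinPolynomial.sum ℝ n)

theorem sum_range_sq_sub_mul_choose_mul_pow_mul_pow_sub (p : ℝ) :
    ∑ k ∈ range (n + 1), (n * p - k) ^ 2 * (n.choose k * p ^ k * (1 - p) ^ (n - k)) =
      n * p * (1 - p) := by
  simpa [Polynomial.eval_finsetSum, bernsteinPolynomial] using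
    congrArg (Polynomial.eval p) (bernsteinPolynomial.variance ℝ n)

theorem one_sub_le_sum_range_choose_mul_pow_mul_pow_sub {p : ℝ} (hp₀ : 0 ≤ p) (hp₁ : p ≤ 1)
    (hnp : 0 < n * p) :
    1 - 4 / (n * p) ≤ ∑ k ∈ range (n + 1),
      if n * p / 2 ≤ k then n.choose k * p ^ k * (1 - p) ^ (n - k) else 0 := by
  set b : ℕ → ℝ := fun k => n.choose k * p ^ k * (1 - p) ^ (n - k)
  have hb : ∀ k, 0 ≤ b k := fun k => by have := sub_nonneg.2 hp₁; positivity
  have htail : ∑ k ∈ range (n + 1) with ¬ n * p / 2 ≤ ((k : ℕ) : ℝ), b k ≤ 4 / (n * p) :=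
    calc ∑ k ∈ range (n + 1) with ¬ n * p / 2 ≤ ((k : ℕ) : ℝ), b k
        ≤ ∑ k ∈ range (n + 1) with ¬ n * p / 2 ≤ ((k : ℕ) : ℝ),
            (n * p - k) ^ 2 * b k / (n * p / 2) ^ 2 := by
          refine sum_le_sum fun k hk => ?_
          have hk : k < n * p / 2 := not_le.1 (mem_filter.1 hk).2
          have : (n * p / 2) ^ 2 ≤ (n * p - k) ^ 2 := by nlinarith [Nat.cast_nonneg (α := ℝ) k]
          rw [le_div_iff₀ (by positivity)]
          nlinarith [hb k]
      _ ≤ ∑ k ∈ range (n + 1), (n * p - k) ^ 2 * b k / (n * p / 2) ^ 2 :=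
          sum_le_sum_of_subset_of_nonneg (filter_subset _ _) fun k _ _ => by
            have := hb k; positivity
      _ = 4 * (1 - p) / (n * p) := by
          rw [← sum_div, sum_range_sq_sub_mul_choose_mul_pow_mul_pow_sub]
          field_simp
          ring
      _ ≤ 4 / (n * p) := by gcongr; linarith
  have htotal := sum_range_choose_mul_pow_mul_pow_sub n p
  rw [← sum_filter_add_sum_filter_not _ (fun k : ℕ => n * p / 2 ≤ (k : ℝ))] at htotal
  rw [← sum_filter]
  linarith

end Binomial

section RandomSubset

variable {α : Type*} {p : ℝ}

theorem one_sub_le_sum_powerset_pow_mul_pow_sub (s : Finset α) (hp₀ : 0 ≤ p) (hp₁ : p ≤ 1)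
    (hsp : 0 < #s * p) :
    1 - 4 / (#s * p) ≤ ∑ B ∈ s.powerset,
      if #s * p / 2 ≤ #B then p ^ #B * (1 - p) ^ (#s - #B) else 0 := by
  rw [sum_powerset_apply_card
    (fun m => if #s * p / 2 ≤ m then p ^ m * (1 - p) ^ (#s - m) else 0)]
  convert one_sub_le_sum_range_choose_mul_pow_mul_pow_sub #s hp₀ hp₁ hsp using 2 with k
  rw [nsmul_eq_mul, mul_ite, mul_zero, mul_assoc]

variable [Fintype α]

theorem randProb_mono (hp₀ : 0 ≤ p) (hp₁ : p ≤ 1) {E E' : Finset α → Prop}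
    (h : ∀ A, E A → E' A) : randProb α p E ≤ randProb α p E' := by
  unfold randProb
  refine sum_le_sum fun A _ => ?_
  have := sub_nonneg.2 hp₁
  split_ifs with hE hE'
  · exact le_rfl
  · exact absurd (h A hE) hE'
  · positivity
  · exact le_rfl

variable [DecidableEq α]

theorem sum_inter_mul_pow_mul_pow_sub (p : ℝ) (g : Finset α → ℝ) (C : Finset α) :
    ∑ A : Finset α, g (A ∩ C) * (p ^ #A * (1 - p) ^ (Fintype.card α - #A)) =
      ∑ B ∈ C.powerset, g B * (p ^ #B * (1 - p) ^ (#C - #B)) := by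
  have hweight : ∀ A : Finset α, p ^ #A * (1 - p) ^ (Fintype.card α - #A) =
      p ^ #(A ∩ C) * (1 - p) ^ (#C - #(A ∩ C)) *
        (p ^ #(A \ C) * (1 - p) ^ (#Cᶜ - #(A \ C))) := by
    intro A
    have hA := card_inter_add_card_sdiff A C
    have hAC : #(A ∩ C) ≤ #C := card_le_card inter_subset_right
    have hAC' : #(A \ C) ≤ #Cᶜ := card_le_card fun x hx => by simp_all
    have hC := card_compl C
    have hCα := card_le_univ C
    rw [show Fintype.card α - #A = (#C - #(A ∩ C)) + (#Cᶜ - #(A \ C)) by omega, ← hA]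
    ring
  calc ∑ A : Finset α, g (A ∩ C) * (p ^ #A * (1 - p) ^ (Fintype.card α - #A))
      = ∑ BE ∈ C.powerset ×ˢ Cᶜ.powerset,
          g BE.1 * (p ^ #BE.1 * (1 - p) ^ (#C - #BE.1)) *
            (p ^ #BE.2 * (1 - p) ^ (#Cᶜ - #BE.2)) := by
        refine sum_nbij' (fun A => (A ∩ C, A \ C)) (fun BE => BE.1 ∪ BE.2) ?_ ?_ ?_ ?_ ?_
        · intro A _; simp [subset_iff]
        · intro BE _; simp
        · intro A _; exact sup_inf_sdiff A C
        · rintro ⟨B, E⟩ hBE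
          obtain ⟨hB, hE⟩ : B ⊆ C ∧ Disjoint E C := by
            simpa [subset_compl_iff_disjoint_right] using hBE
          refine Prod.ext (?_ : (B ∪ E) ∩ C = B) (?_ : (B ∪ E) \ C = E)
          · rw [union_inter_distrib_right, inter_eq_left.2 hB, disjoint_iff_inter_eq_empty.1 hE,
              union_empty]
          · rw [union_sdiff_distrib, sdiff_eq_empty_iff_subset.2 hB, hE.sdiff_eq_left, empty_union]
        · intro A _; rw [hweight, ← mul_assoc]
    _ = ∑ B ∈ C.powerset, g B * (p ^ #B * (1 - p) ^ (#C - #B)) := by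
        simp_rw [sum_product, ← mul_sum, sum_pow_mul_eq_add_pow, add_sub_cancel, one_pow, mul_one]

theorem one_sub_le_randProb_card_inter (C : Finset α) (hp₀ : 0 ≤ p) (hp₁ : p ≤ 1)
    (hCp : 0 < #C * p) : 1 - 4 / (#C * p) ≤ randProb α p (fun A => #C * p / 2 ≤ #(A ∩ C)) := by
  have := sum_inter_mul_pow_mul_pow_sub p (fun B => if #C * p / 2 ≤ #B then 1 else 0) C
  simp only [boole_mul] at this
  unfold randProb
  convert (one_sub_le_sum_powerset_pow_mul_pow_sub C hp₀ hp₁ hCp).trans_eq this.symm using 1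

end RandomSubset

/-- Claim 10. -/
theorem stmt11 (d : ℕ) (hd : 2 ≤ d) (ε : ℝ) (hε : 0 < ε) :
    ∃ K : ℝ, 0 < K ∧
      ∀ (F : Type) [Field F] [Fintype F], ∀ p : ℝ, 0 ≤ p → p ≤ 1 →
        K ≤ p * (Fintype.card F : ℝ) →
        1 - ε ≤ randProb (Fin d → F) p
          (fun A => ∃ S ⊆ A, GenPos F d ↑S ∧
            p * (Fintype.card F : ℝ) / 2 ≤ (S.card : ℝ)) := by
  classical
  refine ⟨4 / ε, by positivity, fun F _ _ p hp₀ hp₁ hK => ?_⟩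
  have hd₀ : 0 < d := by omega
  set C : Finset (Fin d → F) := univ.image (momentCurve F d)
  have hC : (#C : ℝ) * p = p * Fintype.card F := by
    rw [card_image_of_injective _ (momentCurve_injective hd₀), card_univ, mul_comm]
  have hpq : 0 < p * Fintype.card F := (div_pos four_pos hε).trans_le hK
  calc 1 - ε ≤ 1 - 4 / (#C * p) := by
        rw [hC, sub_le_sub_iff_left, div_le_iff₀ hpq]
        rwa [div_le_iff₀ hε, mul_comm] at hK
    _ ≤ randProb (Fin d → F) p (fun A => #C * p / 2 ≤ #(A ∩ C)) :=
        one_sub_le_randProb_card_inter C hp₀ hp₁ (hC ▸ hpq)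
    _ ≤ _ := randProb_mono hp₀ hp₁ fun A hA =>
        ⟨A ∩ C, inter_subset_left,
          genPos_of_subset_range_momentCurve hd₀ fun x hx => by
            simpa [C] using (mem_inter.1 hx).2,
          hC ▸ hA⟩
end
end
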